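/- arXiv:1712.03033 — 4 statements merged into one kernel-verified Lean document; each statement's English description precedes it below -/
import Mathlib

section
/- Let G be a simple 3-regular graph with κ₀(x,y) ≥ 0 for all edges xy and κ₀(x,y) > 0 for at least one edge xy. Then G is isomorphic to the complete graph K_4 or to the prism graph Y_3; conversely both K_4 and Y_3 have this property. -/
open Finset

variable {V : Type*}

/-- The non-normalized graph Laplacian: `Δ f (x) = ∑_{y ∼ x} (f y − f x)`. -/
noncomputable def graphLap (G : SimpleGraph V) [∀ v, Fintype (G.neighborSet v)]
    (f : V → ℝ) (x : V) : ℝ :=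
  ∑ y ∈ G.neighborFinset x, (f y - f x)

/-- The Bakry–Émery operator `Γ`: `2Γ(f,g) = Δ(fg) − fΔg − gΔf`. -/
noncomputable def graphGamma (G : SimpleGraph V) [∀ v, Fintype (G.neighborSet v)]
    (f g : V → ℝ) (x : V) : ℝ :=
  (graphLap G (fun z => f z * g z) x - f x * graphLap G g x - g x * graphLap G f x) / 2

/-- The Bakry–Émery operator `Γ₂`: `2Γ₂(f,g) = ΔΓ(f,g) − Γ(f,Δg) − Γ(Δf,g)`. -/
noncomputable def graphGamma2 (G : SimpleGraph V) [∀ v, Fintype (G.neighborSet v)]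
    (f g : V → ℝ) (x : V) : ℝ :=
  (graphLap G (graphGamma G f g) x - graphGamma G f (graphLap G g) x -
    graphGamma G (graphLap G f) g x) / 2

/-- A vertex `x` satisfies the curvature-dimension inequality `CD(0,∞)` if
`Γ₂(f)(x) ≥ 0` for all `f : V → ℝ`. -/
def SatisfiesCD (G : SimpleGraph V) [∀ v, Fintype (G.neighborSet v)] (x : V) : Prop :=
  ∀ f : V → ℝ, 0 ≤ graphGamma2 G f f x

open Classical in
/-- The idleness-0 probability measure `μ_x^0` at a vertex `x`. -/
noncomputable def muZero (G : SimpleGraph V) [∀ v, Fintype (G.neighborSet v)] (x : V) :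
    V → ℝ :=
  fun z => if G.Adj x z then 1 / (G.degree x : ℝ) else 0

/-- The Wasserstein distance `W₁(μ_x^0, μ_y^0)`: the infimum of the transport cost over
all couplings of `μ_x^0` and `μ_y^0`. -/
noncomputable def Wone (G : SimpleGraph V) [∀ v, Fintype (G.neighborSet v)] (x y : V) : ℝ :=
  sInf {w : ℝ | ∃ π : V → V → ℝ,
    (∀ u v, 0 ≤ π u v) ∧
    (∀ u v, π u v ≠ 0 → G.Adj x u ∧ G.Adj y v) ∧
    (∀ u, ∑ v ∈ G.neighborFinset y, π u v = muZero G x u) ∧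
    (∀ v, ∑ u ∈ G.neighborFinset x, π u v = muZero G y v) ∧
    w = ∑ u ∈ G.neighborFinset x, ∑ v ∈ G.neighborFinset y, (G.dist u v : ℝ) * π u v}

/-- The Ollivier–Ricci curvature with idleness `0`: `κ₀(x,y) = 1 − W₁(μ_x^0, μ_y^0)`. -/
noncomputable def kappaZero (G : SimpleGraph V) [∀ v, Fintype (G.neighborSet v)]
    (x y : V) : ℝ :=
  1 - Wone G x y

/-- The prism graph `Y n` on vertices `ZMod n × Bool`: two `n`-cycles joined by rungs;
equivalently the Cartesian product of the cycle `C_n` with `K₂`. -/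
def prismGraph (n : ℕ) : SimpleGraph (ZMod n × Bool) :=
  SimpleGraph.fromRel (fun p q => (p.2 = q.2 ∧ q.1 = p.1 + 1) ∨ (p.1 = q.1 ∧ p.2 ≠ q.2))

/-- The Möbius ladder `M n` on vertices `ZMod (2n)`: the cycle `C_{2n}` together with
all antipodal edges. -/
def mobiusLadder (n : ℕ) : SimpleGraph (ZMod (2 * n)) :=
  SimpleGraph.fromRel (fun p q => q = p + 1 ∨ q = p + (n : ZMod (2 * n)))

open Classical in
/-- The Laplacian matrix `L = D − A` of a finite graph. -/
noncomputable def lapMat (G : SimpleGraph V) [Fintype V] : Matrix V V ℝ :=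
  fun i j =>
    (if i = j then ∑ k : V, (if G.Adj i k then (1 : ℝ) else 0) else 0) -
      (if G.Adj i j then 1 else 0)

/-- `λ₁ G` : the smallest non-zero eigenvalue of the Laplacian matrix of `G`. -/
noncomputable def lambdaOne (G : SimpleGraph V) [Fintype V] : ℝ :=
  sInf {t : ℝ | t ≠ 0 ∧ ∃ v : V → ℝ, v ≠ 0 ∧ (lapMat G).mulVec v = t • v}

noncomputable instance fintypeNeighborSetOfFinite [Finite V] (G : SimpleGraph V) (v : V) :
    Fintype (G.neighborSet v) := Fintype.ofFinite _

/-!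
Two transport estimates suffice. If `f u - f v ≤ d(u, v)` for all `u ∼ x`, `v ∼ y`, then
`W₁(μ_x, μ_y)` is at least the mean of `f` over `N(x)` minus its mean over `N(y)`; and an
automorphism carrying `x` to `y` bounds `W₁(μ_x, μ_y)` by the mean displacement of `N(x)`.

In a connected cubic graph, if the edge `xy` lies in no triangle, `f = 1` off `N(y)` gives
`W₁ ≥ 1`; so an edge with `κ₀ > 0` lies in a triangle. If the edge `xa` lies in no triangle and
no 4-cycle, `f = 2` on `N(x) \ {a}` and `f = 1` on `{x, a}` gives `W₁ ≥ 4/3`; so when `κ₀ ≥ 0`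
every edge lies in a triangle or a 4-cycle. Around a triangle this leaves no room: either an edge
lies in two triangles and they close up into `K₄`, or the third neighbours of the triangle form a
second triangle, and the graph is `Y₃`.

Conversely, every edge `xy` of `K₄` or `Y₃` is swapped by an automorphism moving each neighbour of
`x` by at most one step, so `W₁ ≤ 1`, strictly when that automorphism fixes a neighbour of `x`.
-/

open SimpleGraph

section Transport

variable {G : SimpleGraph V} [∀ v, Fintype (G.neighborSet v)]

lemma muZero_of_adj {x z : V} (h : G.Adj x z) : muZero G x z = 1 / G.degree x := if_pos h

lemma muZero_of_not_adj {x z : V} (h : ¬ G.Adj x z) : muZero G x z = 0 := if_neg h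

lemma muZero_nonneg (x z : V) : 0 ≤ muZero G x z := by
  unfold muZero; split_ifs <;> positivity

lemma muZero_iso_apply (φ : G ≃g G) (x u : V) : muZero G (φ x) (φ u) = muZero G x u := by
  classical
  simp only [muZero, φ.degree_eq]
  exact if_congr φ.map_adj_iff rfl rfl

lemma wone_le_of_coupling {x y : V} (π : V → V → ℝ) (hπ : ∀ u v, 0 ≤ π u v)
    (hsupp : ∀ u v, π u v ≠ 0 → G.Adj x u ∧ G.Adj y v)
    (hleft : ∀ u, ∑ v ∈ G.neighborFinset y, π u v = muZero G x u)
    (hright : ∀ v, ∑ u ∈ G.neighborFinset x, π u v = muZero G y v) :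
    Wone G x y ≤ ∑ u ∈ G.neighborFinset x, ∑ v ∈ G.neighborFinset y, (G.dist u v : ℝ) * π u v :=
  csInf_le ⟨0, by
    rintro w ⟨π, hπ, -, -, -, rfl⟩
    exact Finset.sum_nonneg fun u _ => Finset.sum_nonneg fun v _ => by
      have := hπ u v; positivity⟩ ⟨π, hπ, hsupp, hleft, hright, rfl⟩

lemma le_wone_of_sub_le_dist {x y : V} (hx : G.degree x ≠ 0) (hy : G.degree y ≠ 0)
    (f : V → ℝ) (hf : ∀ u v, G.Adj x u → G.Adj y v → f u - f v ≤ G.dist u v) :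
    (∑ u ∈ G.neighborFinset x, f u) / G.degree x -
      (∑ v ∈ G.neighborFinset y, f v) / G.degree y ≤ Wone G x y := by
  have hmean : ∀ (g : V → ℝ) z, ∑ u ∈ G.neighborFinset z, g u * muZero G z u =
      (∑ u ∈ G.neighborFinset z, g u) / G.degree z := fun g z => by
    rw [Finset.sum_div]
    exact Finset.sum_congr rfl fun u hu => by
      rw [muZero_of_adj ((mem_neighborFinset ..).1 hu), mul_one_div]
  have hmass : ∀ z, G.degree z ≠ 0 → ∑ u ∈ G.neighborFinset z, muZero G z u = 1 :=
    fun z hz => by simpa [hz] using hmean 1 z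
  refine le_csInf ⟨_, fun u v => muZero G x u * muZero G y v, fun u v => ?_, fun u v h => ?_,
    fun u => ?_, fun v => ?_, rfl⟩ ?_
  · exact mul_nonneg (muZero_nonneg x u) (muZero_nonneg y v)
  · by_contra hn
    rcases not_and_or.1 hn with h' | h' <;> simp [muZero_of_not_adj h'] at h
  · rw [← Finset.mul_sum, hmass y hy, mul_one]
  · rw [← Finset.sum_mul, hmass x hx, one_mul]
  · rintro w ⟨π, hπ, -, hleft, hright, rfl⟩
    calc (∑ u ∈ G.neighborFinset x, f u) / G.degree x -
          (∑ v ∈ G.neighborFinset y, f v) / G.degree y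
        = ∑ u ∈ G.neighborFinset x, ∑ v ∈ G.neighborFinset y, (f u - f v) * π u v := by
          simp only [← hmean, sub_mul, Finset.sum_sub_distrib, ← hleft, ← hright,
            Finset.mul_sum]
          rw [Finset.sum_comm (f := fun u v => f v * π u v)]
      _ ≤ ∑ u ∈ G.neighborFinset x, ∑ v ∈ G.neighborFinset y, (G.dist u v : ℝ) * π u v :=
          Finset.sum_le_sum fun u hu => Finset.sum_le_sum fun v hv =>
            mul_le_mul_of_nonneg_right (hf u v ((mem_neighborFinset ..).1 hu)
              ((mem_neighborFinset ..).1 hv)) (hπ u v)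

lemma wone_le_of_iso (φ : G ≃g G) (x : V) :
    Wone G x (φ x) ≤ (∑ u ∈ G.neighborFinset x, (G.dist u (φ u) : ℝ)) / G.degree x := by
  classical
  have hmem : ∀ u, φ u ∈ G.neighborFinset (φ x) ↔ u ∈ G.neighborFinset x := fun u => by
    simp only [mem_neighborFinset, φ.map_adj_iff]
  have hzero : ∀ u, u ∉ G.neighborFinset x → muZero G x u = 0 := fun u hu =>
    muZero_of_not_adj ((mem_neighborFinset ..).not.1 hu)
  refine (wone_le_of_coupling (fun u v => if v = φ u then muZero G x u else 0)
    (fun u v => by positivity [muZero_nonneg (G := G) x u]) ?_ ?_ ?_).trans_eq ?_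
  · intro u v h
    split_ifs at h with hv
    · subst hv
      have hu : G.Adj x u := by_contra fun hn => h (muZero_of_not_adj hn)
      exact ⟨hu, φ.map_adj_iff.2 hu⟩
    · exact absurd rfl h
  · intro u
    rw [Finset.sum_ite_eq']
    split_ifs with hu
    · rfl
    · exact (hzero u ((hmem u).not.1 hu)).symm
  · intro v
    rw [Finset.sum_eq_single (φ.symm v) (fun u _ hu => if_neg fun h => hu (by simp [h]))
      (fun hv => by simp [hzero _ hv]), if_pos (by simp), ← muZero_iso_apply φ,
      RelIso.apply_symm_apply]
  · rw [Finset.sum_div]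
    refine Finset.sum_congr rfl fun u hu => ?_
    simp only [mul_ite, mul_zero, Finset.sum_ite_eq', hmem, if_pos hu,
      muZero_of_adj ((mem_neighborFinset ..).1 hu), mul_one_div]

end Transport

section LocalShift

variable {G : SimpleGraph V}

def IsLocalShift (φ : G ≃g G) (x : V) : Prop :=
  ∀ u, G.Adj x u → φ u = u ∨ G.Adj u (φ u)

lemma IsLocalShift.dist_le_one {φ : G ≃g G} {x u : V} (h : IsLocalShift φ x)
    (hu : G.Adj x u) : (G.dist u (φ u) : ℝ) ≤ 1 := by
  rcases h u hu with h | h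
  · simp [h]
  · simp [dist_eq_one_iff_adj.2 h]

lemma IsLocalShift.conj {W : Type*} {H : SimpleGraph W} {ψ : H ≃g H} (e : G ≃g H) {x : V}
    (h : IsLocalShift ψ (e x)) : IsLocalShift (e.trans (ψ.trans e.symm)) x := by
  intro u hu
  rcases h (e u) (e.map_adj_iff.2 hu) with h | h
  · exact .inl (by simp [h])
  · exact .inr (by simpa using e.symm.map_adj_iff.2 h)

lemma isLocalShift_top {α : Type*} (φ : (⊤ : SimpleGraph α) ≃g ⊤) (x : α) :
    IsLocalShift φ x :=
  fun u _ => (eq_or_ne (φ u) u).imp id fun h => (top_adj _ _).2 h.symm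

variable [∀ v, Fintype (G.neighborSet v)]

lemma kappaZero_nonneg_of_isLocalShift {φ : G ≃g G} {x : V} (h : IsLocalShift φ x) :
    0 ≤ kappaZero G x (φ x) := by
  have hsum : ∑ u ∈ G.neighborFinset x, (G.dist u (φ u) : ℝ) ≤ G.degree x := by
    rw [← card_neighborFinset_eq_degree, ← nsmul_one, ← Finset.sum_const]
    exact Finset.sum_le_sum fun u hu => h.dist_le_one ((mem_neighborFinset ..).1 hu)
  have := (wone_le_of_iso φ x).trans (div_le_one_of_le₀ hsum (Nat.cast_nonneg _))
  unfold kappaZero; linarith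

lemma kappaZero_pos_of_isLocalShift {φ : G ≃g G} {x u : V} (h : IsLocalShift φ x)
    (hu : G.Adj x u) (hfix : φ u = u) : 0 < kappaZero G x (φ x) := by
  have hdeg : (0 : ℝ) < G.degree x := Nat.cast_pos.2 ((G.degree_pos_iff_exists_adj x).2 ⟨u, hu⟩)
  have hsum : ∑ w ∈ G.neighborFinset x, (G.dist w (φ w) : ℝ) < G.degree x := by
    rw [← card_neighborFinset_eq_degree, ← nsmul_one, ← Finset.sum_const]
    exact Finset.sum_lt_sum (fun w hw => h.dist_le_one ((mem_neighborFinset ..).1 hw))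
      ⟨u, (mem_neighborFinset ..).2 hu, by simp [hfix]⟩
  have := (wone_le_of_iso φ x).trans_lt ((div_lt_one hdeg).2 hsum)
  unfold kappaZero; linarith

lemma kappaZero_nonneg_of_iso {W : Type*} {H : SimpleGraph W} (e : G ≃g H)
    (hH : ∀ p q, H.Adj p q → ∃ ψ : H ≃g H, ψ p = q ∧ IsLocalShift ψ p) {x y : V}
    (hxy : G.Adj x y) : 0 ≤ kappaZero G x y := by
  obtain ⟨ψ, hψ, hloc⟩ := hH _ _ (e.map_adj_iff.2 hxy)
  simpa [hψ] using kappaZero_nonneg_of_isLocalShift (hloc.conj e)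

lemma exists_kappaZero_pos_of_iso {W : Type*} {H : SimpleGraph W} (e : G ≃g H) {p q u : W}
    {ψ : H ≃g H} (hψ : ψ p = q) (hloc : IsLocalShift ψ p) (hpq : H.Adj p q) (hpu : H.Adj p u)
    (hfix : ψ u = u) : ∃ x y, G.Adj x y ∧ 0 < kappaZero G x y := by
  refine ⟨e.symm p, e.symm q, e.symm.map_adj_iff.2 hpq, ?_⟩
  rw [← e.apply_symm_apply p] at hloc
  simpa [hψ] using kappaZero_pos_of_isLocalShift (hloc.conj e) (u := e.symm u)
    (e.symm.map_adj_iff.2 hpu) (by simp [hfix])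

end LocalShift

section ShortCycles

variable {G : SimpleGraph V}

/-- `u = v` gives a triangle `x u a`, and `G.Adj u v` a square `x u v a`. -/
def InTriangleOrSquare (G : SimpleGraph V) (x a : V) : Prop :=
  ∃ u v, G.Adj x u ∧ u ≠ a ∧ G.Adj a v ∧ v ≠ x ∧ (u = v ∨ G.Adj u v)

lemma two_le_dist_of_not_adj (hconn : G.Connected) {u v : V} (huv : u ≠ v)
    (hadj : ¬ G.Adj u v) : 2 ≤ G.dist u v := by
  have := hconn.pos_dist_of_ne huv
  have : G.dist u v ≠ 1 := fun h => hadj (dist_eq_one_iff_adj.1 h)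
  omega

variable [∀ v, Fintype (G.neighborSet v)]

lemma exists_common_neighbor_of_kappaZero_pos (hconn : G.Connected) {x y : V}
    (hxy : G.Adj x y) (hk : 0 < kappaZero G x y) : ∃ c, G.Adj x c ∧ G.Adj y c := by
  classical
  by_contra! hno
  have hx := ((G.degree_pos_iff_exists_adj x).2 ⟨y, hxy⟩).ne'
  have hy := ((G.degree_pos_iff_exists_adj y).2 ⟨x, hxy.symm⟩).ne'
  have hW := le_wone_of_sub_le_dist hx hy (fun v => if G.Adj y v then 0 else 1) fun u v hu hv => by
    have huv : u ≠ v := fun h => hno u hu (h ▸ hv)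
    simp only [if_neg (hno u hu), if_pos hv, sub_zero]
    exact_mod_cast hconn.pos_dist_of_ne huv
  have h1 : ∑ u ∈ G.neighborFinset x, (if G.Adj y u then (0 : ℝ) else 1) = G.degree x := by
    rw [Finset.sum_congr rfl fun u hu => if_neg (hno u ((mem_neighborFinset ..).1 hu))]
    simp
  have h2 : ∑ v ∈ G.neighborFinset y, (if G.Adj y v then (0 : ℝ) else 1) = 0 :=
    Finset.sum_eq_zero fun v hv => if_pos ((mem_neighborFinset ..).1 hv)
  rw [h1, h2, div_self (Nat.cast_ne_zero.2 hx), zero_div, sub_zero] at hW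
  unfold kappaZero at hk; linarith

lemma two_sub_two_div_degree_le_wone (hconn : G.Connected) {x a : V} (hxa : G.Adj x a)
    (hda : G.degree a = G.degree x) (hno : ¬ InTriangleOrSquare G x a) :
    2 - 2 / (G.degree x : ℝ) ≤ Wone G x a := by
  classical
  simp only [InTriangleOrSquare, not_exists, not_and, not_or] at hno
  have hdx := (G.degree_pos_iff_exists_adj x).2 ⟨a, hxa⟩
  set f : V → ℝ := fun v => if v = x ∨ v = a then 1 else if G.Adj x v then 2 else 0 with hfdef
  have hfx : ∀ u, G.Adj x u → u ≠ a → f u = 2 := fun u hu hua => by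
    simp [hfdef, hu.ne', hua, hu]
  have hfa : ∀ v, G.Adj a v → v ≠ x → f v = 0 := fun v hv hvx => by
    have : ¬ G.Adj x v := fun h => (hno v v h hv.ne' hv hvx).1 rfl
    simp [hfdef, hvx, hv.ne', this]
  have hf1 : f x = 1 := by simp [hfdef]
  have hf2 : f a = 1 := by simp [hfdef]
  have hlip : ∀ u v, G.Adj x u → G.Adj a v → f u - f v ≤ G.dist u v := by
    intro u v hu hv
    rcases eq_or_ne u a with rfl | hua <;> rcases eq_or_ne v x with rfl | hvx
    · simp [hf1, hf2]
    · have : (1 : ℝ) ≤ G.dist u v := by exact_mod_cast hconn.pos_dist_of_ne hv.ne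
      rw [hf2, hfa v hv hvx]; linarith
    · have : (1 : ℝ) ≤ G.dist u v := by exact_mod_cast hconn.pos_dist_of_ne hu.ne'
      rw [hfx u hu hua, hf1]; linarith
    · have h := hno u v hu hua hv hvx
      have : (2 : ℝ) ≤ G.dist u v := by exact_mod_cast two_le_dist_of_not_adj hconn h.1 h.2
      rw [hfx u hu hua, hfa v hv hvx]; linarith
  have hsumx : ∑ u ∈ G.neighborFinset x, f u = 2 * G.degree x - 1 := by
    have hmem := (mem_neighborFinset G x a).2 hxa
    rw [← Finset.add_sum_erase _ _ hmem, hf2, Finset.sum_congr rfl fun u hu =>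
      hfx u ((mem_neighborFinset ..).1 (Finset.mem_of_mem_erase hu)) (Finset.ne_of_mem_erase hu),
      Finset.sum_const, Finset.card_erase_of_mem hmem, card_neighborFinset_eq_degree,
      nsmul_eq_mul, Nat.cast_pred hdx]
    ring
  have hsuma : ∑ v ∈ G.neighborFinset a, f v = 1 := by
    have hmem := (mem_neighborFinset G a x).2 hxa.symm
    rw [← Finset.add_sum_erase _ _ hmem, hf1, Finset.sum_eq_zero fun v hv =>
      hfa v ((mem_neighborFinset ..).1 (Finset.mem_of_mem_erase hv)) (Finset.ne_of_mem_erase hv),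
      add_zero]
  have hW := le_wone_of_sub_le_dist hdx.ne' (hda ▸ hdx.ne') f hlip
  rw [hsumx, hsuma, hda] at hW
  convert hW using 1
  field_simp
  ring

lemma inTriangleOrSquare_of_kappaZero_nonneg (hconn : G.Connected) {x a : V} (hxa : G.Adj x a)
    (hdeg : 2 < G.degree x) (hda : G.degree a = G.degree x) (hk : 0 ≤ kappaZero G x a) :
    InTriangleOrSquare G x a := by
  by_contra hno
  have hW := two_sub_two_div_degree_le_wone hconn hxa hda hno
  have hd : (2 : ℝ) < G.degree x := by exact_mod_cast hdeg
  have : 2 / (G.degree x : ℝ) < 1 := (div_lt_one (by linarith)).2 hd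
  unfold kappaZero at hk
  linarith

end ShortCycles

section Cubic

variable {G : SimpleGraph V} [∀ v, Fintype (G.neighborSet v)]

lemma adj_iff_of_degree_eq_three {x p q r : V} (h : G.degree x = 3) (hp : G.Adj x p)
    (hq : G.Adj x q) (hr : G.Adj x r) (hpq : p ≠ q) (hpr : p ≠ r) (hqr : q ≠ r) (w : V) :
    G.Adj x w ↔ w = p ∨ w = q ∨ w = r := by
  classical
  have hsub : ({p, q, r} : Finset V) ⊆ G.neighborFinset x := by
    simp [Finset.insert_subset_iff, hp, hq, hr]
  have := Finset.eq_of_subset_of_card_le hsub (by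
    rw [card_neighborFinset_eq_degree, h, Finset.card_eq_three.2 ⟨p, q, r, hpq, hpr, hqr, rfl⟩])
  rw [← mem_neighborFinset, ← this]
  simp

lemma exists_adj_iff_of_degree_eq_three {x p q : V} (h : G.degree x = 3) (hp : G.Adj x p)
    (hq : G.Adj x q) (hpq : p ≠ q) :
    ∃ r, r ≠ p ∧ r ≠ q ∧ ∀ w, G.Adj x w ↔ w = p ∨ w = q ∨ w = r := by
  classical
  obtain ⟨r, hr, hrpq⟩ : ∃ r ∈ G.neighborFinset x, r ∉ ({p, q} : Finset V) :=
    Finset.exists_mem_notMem_of_card_lt_card (by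
      rw [card_neighborFinset_eq_degree, h, Finset.card_pair hpq]; norm_num)
  simp only [Finset.mem_insert, Finset.mem_singleton, not_or] at hrpq
  exact ⟨r, hrpq.1, hrpq.2, adj_iff_of_degree_eq_three h hp hq ((mem_neighborFinset ..).1 hr)
    hpq (Ne.symm hrpq.1) (Ne.symm hrpq.2)⟩

-- In the next two lemmas every vertex in play has its three neighbours listed, so that `grind`
-- can close each step by chasing the finitely many cases of `InTriangleOrSquare`.

lemma adj_of_two_triangles (hcubic : ∀ v, G.degree v = 3)
    (hshort : ∀ x a, G.Adj x a → InTriangleOrSquare G x a) {p q r s : V}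
    (hpq : G.Adj p q) (hpr : G.Adj p r) (hqr : G.Adj q r) (hps : G.Adj p s) (hqs : G.Adj q s)
    (hrs : r ≠ s) : G.Adj r s := by
  by_contra hnrs
  have hp := adj_iff_of_degree_eq_three (hcubic p) hpq hpr hps hqr.ne hqs.ne hrs
  have hq := adj_iff_of_degree_eq_three (hcubic q) hpq.symm hqr hqs hpr.ne hps.ne hrs
  obtain ⟨w, hwp, hwq, hr⟩ := exists_adj_iff_of_degree_eq_three (hcubic r) hpr.symm hqr.symm hpq.ne
  obtain ⟨t, htp, htq, hs⟩ := exists_adj_iff_of_degree_eq_three (hcubic s) hps.symm hqs.symm hpq.ne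
  have hrw : G.Adj r w := (hr w).2 (by simp)
  -- if `r` and `s` share their last neighbour `w`, the edge from `w` to its own last neighbour
  -- lies in no triangle or square; otherwise the edge `rw` does not
  by_cases hwt : w = t
  · subst hwt
    obtain ⟨z, hzr, hzs, hw⟩ := exists_adj_iff_of_degree_eq_three (hcubic w) hrw.symm
      ((hs w).2 (by simp)).symm hrs
    have hwz : G.Adj w z := (hw z).2 (by simp)
    obtain ⟨u, v, hwu, huz, hzv, hvw, huv⟩ := hshort w z hwz
    clear hshort hcubic
    grind [SimpleGraph.adj_comm, SimpleGraph.irrefl]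
  · obtain ⟨u, v, hru, huw, hwv, hvr, huv⟩ := hshort r w hrw
    clear hshort hcubic
    grind [SimpleGraph.adj_comm, SimpleGraph.irrefl]

lemma adj_of_pendants (hcubic : ∀ v, G.degree v = 3)
    (hshort : ∀ x a, G.Adj x a → InTriangleOrSquare G x a) {x y c a b z : V}
    (hx : ∀ w, G.Adj x w ↔ w = y ∨ w = c ∨ w = a) (hy : ∀ w, G.Adj y w ↔ w = c ∨ w = x ∨ w = b)
    (hc : ∀ w, G.Adj c w ↔ w = x ∨ w = y ∨ w = z)
    (hac : a ≠ c) (hbc : b ≠ c) (hzx : z ≠ x) (hzy : z ≠ y) (hab : a ≠ b) (hza : z ≠ a) :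
    G.Adj a b := by
  by_contra hnab
  -- then `a ∼ z ∼ b`, the last neighbour `w` of `a` is adjacent to `b`, and the edge from `w` to
  -- its own last neighbour lies in no triangle or square
  have hxa : G.Adj x a := (hx a).2 (by simp)
  have hyb : G.Adj y b := (hy b).2 (by simp)
  have hcz : G.Adj c z := (hc z).2 (by simp)
  have haz : G.Adj a z := by
    obtain ⟨u, v, hxu, hua, hav, hvx, huv⟩ := hshort x a hxa
    clear hshort hcubic
    grind [SimpleGraph.adj_comm, SimpleGraph.irrefl]
  have hbz : G.Adj b z := by
    obtain ⟨u, v, hyu, hub, hbv, hvy, huv⟩ := hshort y b hyb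
    clear hshort hcubic
    grind [SimpleGraph.adj_comm, SimpleGraph.irrefl]
  have hz := adj_iff_of_degree_eq_three (hcubic z) hcz.symm haz.symm hbz.symm hac.symm hbc.symm hab
  obtain ⟨w, hwx, hwz, ha⟩ := exists_adj_iff_of_degree_eq_three (hcubic a) hxa.symm haz hzx.symm
  have haw : G.Adj a w := (ha w).2 (by simp)
  have hwb : G.Adj w b := by
    obtain ⟨u, v, hau, huw, hwv, hva, huv⟩ := hshort a w haw
    clear hshort hcubic
    grind [SimpleGraph.adj_comm, SimpleGraph.irrefl]
  have hwy : w ≠ y := by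
    rintro rfl
    rcases (hy a).1 haw.symm with h | h | h
    exacts [hac h, hxa.ne h.symm, hab h]
  have hb := adj_iff_of_degree_eq_three (hcubic b) hyb.symm hbz hwb.symm hzy.symm hwy.symm
    hwz.symm
  obtain ⟨t, hta, htb, hw⟩ := exists_adj_iff_of_degree_eq_three (hcubic w) haw.symm hwb hab
  have hwt : G.Adj w t := (hw t).2 (by simp)
  obtain ⟨u, v, hwu, hut, htv, hvw, huv⟩ := hshort w t hwt
  clear hshort hcubic
  grind [SimpleGraph.adj_comm, SimpleGraph.irrefl]

end Cubic

section Isomorphisms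

variable {G : SimpleGraph V} [∀ v, Fintype (G.neighborSet v)]
  {W : Type*} [Fintype W] {H : SimpleGraph W} [DecidableRel H.Adj]

lemma exists_eq_of_adj_of_degree_le (f : H →g G) (hf : Function.Injective f)
    (hdeg : ∀ i, G.degree (f i) ≤ #{j | H.Adj i j}) {i : W} {v : V} (hv : G.Adj (f i) v) :
    ∃ j, H.Adj i j ∧ f j = v := by
  classical
  have hsub : ({j | H.Adj i j} : Finset W).map ⟨f, hf⟩ ⊆ G.neighborFinset (f i) := by
    intro w hw
    obtain ⟨j, hj, rfl⟩ := Finset.mem_map.1 hw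
    exact (mem_neighborFinset ..).2 (f.map_adj (Finset.mem_filter.1 hj).2)
  have heq := Finset.eq_of_subset_of_card_le hsub (by
    rw [Finset.card_map, card_neighborFinset_eq_degree]; exact hdeg i)
  obtain ⟨j, hj, rfl⟩ := Finset.mem_map.1 (heq ▸ (mem_neighborFinset ..).2 hv)
  exact ⟨j, (Finset.mem_filter.1 hj).2, rfl⟩

lemma nonempty_iso_of_hom [Nonempty W] (hconn : G.Connected) (f : H →g G)
    (hf : Function.Injective f) (hdeg : ∀ i, G.degree (f i) ≤ #{j | H.Adj i j}) :
    Nonempty (G ≃g H) := by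
  have hsurj : Function.Surjective f := by
    intro v
    obtain ⟨p⟩ := hconn.preconnected (f (Classical.arbitrary W)) v
    suffices ∀ u w (p : G.Walk u w), u ∈ Set.range f → w ∈ Set.range f from
      this _ _ p ⟨_, rfl⟩
    intro u w p
    induction p with
    | nil => exact id
    | cons h _ ih =>
      rintro ⟨i, rfl⟩
      obtain ⟨j, -, rfl⟩ := exists_eq_of_adj_of_degree_le f hf hdeg h
      exact ih ⟨j, rfl⟩
  have hadj : ∀ {i j}, G.Adj (f i) (f j) ↔ H.Adj i j := fun {i j} =>
    ⟨fun h => by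
      obtain ⟨k, hk, hkj⟩ := exists_eq_of_adj_of_degree_le f hf hdeg h
      exact hf hkj ▸ hk, f.map_adj⟩
  exact ⟨(RelIso.ofSurjective ⟨⟨f, hf⟩, hadj⟩ hsurj).symm⟩

end Isomorphisms

instance (n : ℕ) : DecidableRel (prismGraph n).Adj := fun p q =>
  decidable_of_iff' _ (fromRel_adj _ p q)

section Classification

variable {G : SimpleGraph V} [∀ v, Fintype (G.neighborSet v)]

lemma nonempty_iso_top_of_isClique (hconn : G.Connected) (hcubic : ∀ v, G.degree v = 3)
    {p q r s : V} (hpq : G.Adj p q) (hpr : G.Adj p r) (hps : G.Adj p s) (hqr : G.Adj q r)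
    (hqs : G.Adj q s) (hrs : G.Adj r s) : Nonempty (G ≃g (⊤ : SimpleGraph (Fin 4))) := by
  let f : (⊤ : SimpleGraph (Fin 4)) →g G :=
    ⟨![p, q, r, s], fun {i j} h => by
      fin_cases i <;> fin_cases j <;> simp_all [G.adj_comm]⟩
  refine nonempty_iso_of_hom hconn f (Hom.injective_of_top_hom f) fun i => ?_
  rw [hcubic]
  revert i
  decide

lemma nonempty_iso_prismGraph (hconn : G.Connected) (hcubic : ∀ v, G.degree v = 3)
    {x y c a b z : V} (hxy : G.Adj x y) (hyc : G.Adj y c) (hcx : G.Adj c x)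
    (hab : G.Adj a b) (hbz : G.Adj b z) (hza : G.Adj z a)
    (hxa : G.Adj x a) (hyb : G.Adj y b) (hcz : G.Adj c z)
    (hxb : x ≠ b) (hxz : x ≠ z) (hya : y ≠ a) (hyz : y ≠ z) (hca : c ≠ a) (hcb : c ≠ b) :
    Nonempty (G ≃g prismGraph 3) := by
  let g : ZMod 3 × Bool → V := fun p => if p.2 then ![a, b, z] p.1 else ![x, y, c] p.1
  have hg : ∀ p q, (prismGraph 3).Adj p q → G.Adj (g p) (g q) := by
    rintro ⟨i, _ | _⟩ ⟨j, _ | _⟩ h <;> fin_cases i <;> fin_cases j <;>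
      first | exact absurd h (by decide) | simp_all [g, G.adj_comm]
  refine nonempty_iso_of_hom hconn ⟨g, hg _ _⟩ ?_ fun p => ?_
  · rintro ⟨i, _ | _⟩ ⟨j, _ | _⟩ h <;> fin_cases i <;> fin_cases j <;>
      first | rfl | simp_all [g, G.adj_comm]
  · rw [hcubic]
    revert p
    decide

theorem nonempty_iso_top_or_prismGraph (hconn : G.Connected) (hcubic : ∀ v, G.degree v = 3)
    (hshort : ∀ x a, G.Adj x a → InTriangleOrSquare G x a) {x y c : V} (hxy : G.Adj x y)
    (hxc : G.Adj x c) (hyc : G.Adj y c) :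
    Nonempty (G ≃g (⊤ : SimpleGraph (Fin 4))) ∨ Nonempty (G ≃g prismGraph 3) := by
  obtain ⟨a, hay, hac, hx⟩ := exists_adj_iff_of_degree_eq_three (hcubic x) hxy hxc hyc.ne
  obtain ⟨b, hbc, hbx, hy⟩ := exists_adj_iff_of_degree_eq_three (hcubic y) hyc hxy.symm hxc.ne'
  obtain ⟨z, hzx, hzy, hc⟩ := exists_adj_iff_of_degree_eq_three (hcubic c) hxc.symm hyc.symm hxy.ne
  have hxa : G.Adj x a := (hx a).2 (by simp)
  have hyb : G.Adj y b := (hy b).2 (by simp)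
  have hcz : G.Adj c z := (hc z).2 (by simp)
  by_cases hab : a = b
  · subst hab
    have hca := adj_of_two_triangles hcubic hshort hxy hxc hyc hxa hyb hac.symm
    exact .inl (nonempty_iso_top_of_isClique hconn hcubic hxy hxc hxa hyc hyb hca)
  by_cases hbz : b = z
  · subst hbz
    have hxb := adj_of_two_triangles hcubic hshort hyc hxy.symm hxc.symm hyb hcz hbx.symm
    exact .inl (nonempty_iso_top_of_isClique hconn hcubic hxy hxc hxb hyc hyb hcz)
  by_cases hza : z = a
  · subst hza
    have hya := adj_of_two_triangles hcubic hshort hxc.symm hyc.symm hxy hcz hxa hzy.symm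
    exact .inl (nonempty_iso_top_of_isClique hconn hcubic hxy hxc hxa hyc hya hcz)
  have hadj_ab := adj_of_pendants hcubic hshort hx hy hc hac hbc hzx hzy hab hza
  have hadj_bz := adj_of_pendants hcubic hshort hy hc hx hbx hzx hay hac hbz hab
  have hadj_za := adj_of_pendants hcubic hshort hc hx hy hzy hay hbc hbx hza hbz
  exact .inr (nonempty_iso_prismGraph hconn hcubic hxy hyc hxc.symm hadj_ab hadj_bz hadj_za
    hxa hyb hcz hbx.symm hzx.symm hay.symm hzy.symm hac.symm hbc.symm)

end Classification

section PrismAutomorphisms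

def prismReflect (n : ℕ) (c : ZMod n) : prismGraph n ≃g prismGraph n where
  toEquiv := (Equiv.subLeft c).prodCongr (Equiv.refl _)
  map_rel_iff' := by
    intro p q
    have key : ∀ a b : ZMod n, c - a = c - b + 1 ↔ b = a + 1 := fun a b => by
      constructor <;> intro h <;> linear_combination h
    simp only [prismGraph, fromRel_adj, Equiv.prodCongr_apply, Prod.map, Equiv.subLeft_apply,
      Equiv.coe_refl, id, key, ne_eq, Prod.ext_iff, sub_right_inj]
    tauto

def prismFlip (n : ℕ) : prismGraph n ≃g prismGraph n where
  toEquiv := (Equiv.refl _).prodCongr Equiv.boolNot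
  map_rel_iff' := by
    intro p q
    simp [prismGraph, fromRel_adj, Prod.ext_iff, Equiv.boolNot]

-- a rung is swapped by the flip, an edge of a triangle by the reflection fixing the third vertex
lemma prismGraph_three_exists_isLocalShift (p q : ZMod 3 × Bool) (h : (prismGraph 3).Adj p q) :
    ∃ ψ : prismGraph 3 ≃g prismGraph 3, ψ p = q ∧ IsLocalShift ψ p := by
  by_cases hpq : p.2 = q.2
  · refine ⟨prismReflect 3 (p.1 + q.1), ?_⟩
    revert p q
    unfold IsLocalShift
    decide
  · refine ⟨prismFlip 3, ?_⟩
    revert p q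
    unfold IsLocalShift
    decide

end PrismAutomorphisms

theorem cubic_ollivier_nonneg_and_pos_iff_K4_or_Y3_general {V : Type*}
    (G : SimpleGraph V) [∀ v, Fintype (G.neighborSet v)]
    (hconn : G.Connected) (hcubic : ∀ v : V, G.degree v = 3) :
    ((∀ x y : V, G.Adj x y → 0 ≤ kappaZero G x y) ∧
        (∃ x y : V, G.Adj x y ∧ 0 < kappaZero G x y)) ↔
      (Nonempty (G ≃g (⊤ : SimpleGraph (Fin 4))) ∨ Nonempty (G ≃g prismGraph 3)) := by
  constructor
  · rintro ⟨hnn, x, y, hxy, hpos⟩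
    obtain ⟨c, hxc, hyc⟩ := exists_common_neighbor_of_kappaZero_pos hconn hxy hpos
    refine nonempty_iso_top_or_prismGraph hconn hcubic (fun u v huv => ?_) hxy hxc hyc
    exact inTriangleOrSquare_of_kappaZero_nonneg hconn huv (by rw [hcubic]; norm_num)
      (by rw [hcubic, hcubic]) (hnn u v huv)
  · rintro (h | h)
    · obtain ⟨e⟩ := h
      let ψ : (⊤ : SimpleGraph (Fin 4)) ≃g ⊤ := Iso.completeGraph (Equiv.swap 0 1)
      exact ⟨fun _ _ => kappaZero_nonneg_of_iso e fun p q _ =>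
          ⟨Iso.completeGraph (Equiv.swap p q), Equiv.swap_apply_left p q, isLocalShift_top _ _⟩,
        exists_kappaZero_pos_of_iso e (p := 0) (q := 1) (u := 2) (ψ := ψ) rfl
          (isLocalShift_top ψ 0) (by decide) (by decide) rfl⟩
    · obtain ⟨e⟩ := h
      exact ⟨fun _ _ => kappaZero_nonneg_of_iso e prismGraph_three_exists_isLocalShift,
        exists_kappaZero_pos_of_iso e (p := (0, false)) (q := (1, false)) (u := (2, false))
          (ψ := prismReflect 3 1) (by decide) (by unfold IsLocalShift; decide) (by decide)
          (by decide) (by decide)⟩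

/-- A (finite, connected) simple 3-regular graph has `κ₀ ≥ 0` on every
edge and `κ₀ > 0` on at least one edge iff it is isomorphic to the complete graph `K₄`
or to the prism graph `Y₃`. -/
theorem cubic_ollivier_nonneg_and_pos_iff_K4_or_Y3 {V : Type*} [Fintype V]
    (G : SimpleGraph V) [∀ v, Fintype (G.neighborSet v)]
    (hconn : G.Connected) (hcubic : ∀ v : V, G.degree v = 3) :
    ((∀ x y : V, G.Adj x y → 0 ≤ kappaZero G x y) ∧
        (∃ x y : V, G.Adj x y ∧ 0 < kappaZero G x y)) ↔
      (Nonempty (G ≃g (⊤ : SimpleGraph (Fin 4))) ∨ Nonempty (G ≃g prismGraph 3)) :=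
  cubic_ollivier_nonneg_and_pos_iff_K4_or_Y3_general G hconn hcubic
end

section
/- For every n ≥ 2, the multiset of eigenvalues of the Laplacian matrix of the Möbius ladder M_n is {3 + (−1)^{j+1} − 2cos(πj/n) : j = 0,…,2n−1}. -/
open Finset

variable {V : Type*}

/-!
The Möbius ladder is the Cayley graph of `ZMod (2n)` with connection set `{1, -1, n}`, so its
Laplacian is a circulant matrix. Every additive character `ψ` of `ZMod (2n)` is an eigenvector of
it, with eigenvalue `3 - ψ 1 - ψ (-1) - ψ n`, and the characters form a basis of `ZMod (2n) → ℂ`.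
For the `j`-th character `x ↦ exp (π i j x / n)` the values at `±1` add up to `2 cos (π j / n)`
and the value at `n` is `(-1) ^ j`.
-/

open Matrix Polynomial

theorem Matrix.charpoly_eq_prod_of_basis_eigenvectors {R ι κ : Type*} [CommRing R] [Fintype ι]
    [DecidableEq ι] [Fintype κ] [DecidableEq κ] (A : Matrix ι ι R) (b : Module.Basis κ R (ι → R))
    (μ : κ → R) (h : ∀ i, A *ᵥ b i = μ i • b i) : A.charpoly = ∏ i, (X - C (μ i)) := by
  have hdiag : LinearMap.toMatrix b b A.toLin' = diagonal μ := by
    ext i j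
    rw [LinearMap.toMatrix_apply, toLin'_apply, h, map_smul, b.repr_self,
      Finsupp.smul_single, smul_eq_mul, mul_one, Finsupp.single_apply, diagonal_apply]
    rcases eq_or_ne i j with rfl | hij
    · simp
    · simp [hij, hij.symm]
  rw [← charpoly_toLin', ← LinearMap.charpoly_toMatrix _ b, hdiag, charpoly_diagonal]

theorem Matrix.circulant_mulVec_addChar {R α : Type*} [CommSemiring R] [AddCommGroup α]
    [Fintype α] (v : α → R) (ψ : AddChar α R) :
    circulant v *ᵥ ψ = (∑ d, v d * ψ (-d)) • ⇑ψ := by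
  ext k
  simp only [mulVec, dotProduct, circulant_apply, Pi.smul_apply, smul_eq_mul,
    Finset.sum_mul]
  refine Fintype.sum_equiv (Equiv.subLeft k) _ _ fun m => ?_
  rw [Equiv.subLeft_apply, mul_assoc, ← AddChar.map_add_eq_mul, neg_sub, sub_add_cancel]

theorem Matrix.charpoly_circulant {α : Type*} [AddCommGroup α] [Fintype α] [DecidableEq α]
    (v : α → ℂ) :
    (circulant v).charpoly = ∏ ψ : AddChar α ℂ, (X - C (∑ d, v d * ψ (-d))) := by
  classical
  refine charpoly_eq_prod_of_basis_eigenvectors _ (AddChar.complexBasis α) _ fun ψ => ?_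
  rw [AddChar.complexBasis_apply, circulant_mulVec_addChar]

theorem lapMat_eq_circulant_of_adj_iff_sub_mem {α : Type*} [AddCommGroup α] [Fintype α]
    [DecidableEq α] (G : SimpleGraph α) (S : Finset α) (hG : ∀ p q, G.Adj p q ↔ p - q ∈ S) :
    lapMat G = circulant fun d => (if d = 0 then (#S : ℝ) else 0) - if d ∈ S then 1 else 0 := by
  ext i j
  have hdeg : ∑ k, (if i - k ∈ S then (1 : ℝ) else 0) = #S := by
    rw [Fintype.sum_equiv (Equiv.subLeft i) (fun k => if i - k ∈ S then (1 : ℝ) else 0)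
      (fun d => if d ∈ S then 1 else 0) fun k => rfl]
    simp
  simp only [lapMat, circulant_apply, hG, sub_eq_zero, hdeg]

theorem charpoly_lapMat_map_of_adj_iff_sub_mem {α : Type*} [AddCommGroup α] [Fintype α]
    [DecidableEq α] (G : SimpleGraph α) (S : Finset α) (hG : ∀ p q, G.Adj p q ↔ p - q ∈ S) :
    (lapMat G).charpoly.map Complex.ofRealHom =
      ∏ ψ : AddChar α ℂ, (X - C (#S - ∑ s ∈ S, ψ (-s))) := by
  rw [← charpoly_map, lapMat_eq_circulant_of_adj_iff_sub_mem G S hG, map_circulant,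
    charpoly_circulant]
  refine Finset.prod_congr rfl fun ψ _ => congrArg (X - C ·) ?_
  simp [apply_ite Complex.ofReal, sub_mul, Finset.sum_sub_distrib, ite_mul, Finset.sum_ite_mem]

theorem ZMod.prod_eq_prod_range {M : Type*} [CommMonoid M] (N : ℕ) [NeZero N] (f : ZMod N → M) :
    ∏ x, f x = ∏ j ∈ range N, f j :=
  Finset.prod_nbij' ZMod.val Nat.cast (fun x _ => mem_range.2 x.val_lt) (by simp)
    (fun x _ => ZMod.natCast_zmod_val x) (fun j hj => ZMod.val_cast_of_lt (mem_range.1 hj))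
    (fun x _ => by rw [ZMod.natCast_zmod_val])

theorem AddChar.zmodAddEquiv_intCast_apply_intCast (N : ℕ) [NeZero N] (x y : ℤ) :
    zmodAddEquiv (x : ZMod N) y = Complex.exp (2 * Real.pi * (x * y / N) * Complex.I) := by
  show ((zmod N x y : Circle) : ℂ) = _
  rw [zmod_intCast, Circle.coe_exp]
  push_cast
  rfl

theorem Polynomial.roots_eq_of_map_eq_prod_X_sub_C {R S : Type*} [CommRing R] [IsDomain R]
    [CommRing S] {f : R →+* S} (hf : Function.Injective f) {p : R[X]} {s : Multiset R}
    (h : p.map f = (s.map fun a => X - C (f a)).prod) : p.roots = s := by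
  have : p = (s.map fun a => X - C a).prod := by
    apply map_injective f hf
    simp [h, Polynomial.map_multiset_prod, Multiset.map_map]
  rw [this, roots_multiset_prod_X_sub_C]

theorem ZMod.natCast_ne_zero_of_pos_of_lt {N a : ℕ} (ha : 0 < a) (haN : a < N) :
    (a : ZMod N) ≠ 0 := by
  rw [Ne, ZMod.natCast_eq_zero_iff]
  exact Nat.not_dvd_of_pos_of_lt ha haN

namespace MobiusLadder

variable {n : ℕ}

def connectionSet (n : ℕ) : Finset (ZMod (2 * n)) := {1, -1, (n : ZMod (2 * n))}

theorem neg_natCast_self : -(n : ZMod (2 * n)) = n := by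
  refine neg_eq_of_add_eq_zero_left ?_
  have h := ZMod.natCast_self (2 * n)
  push_cast at h
  rw [← two_mul, h]

theorem adj_iff [NeZero n] (p q : ZMod (2 * n)) :
    (mobiusLadder n).Adj p q ↔ p - q ∈ connectionSet n := by
  have hpos := NeZero.pos n
  have h1 : (1 : ZMod (2 * n)) ≠ 0 := by
    exact_mod_cast ZMod.natCast_ne_zero_of_pos_of_lt one_pos (by omega)
  have hn : (n : ZMod (2 * n)) ≠ 0 := ZMod.natCast_ne_zero_of_pos_of_lt hpos (by omega)
  simp only [mobiusLadder, connectionSet, SimpleGraph.fromRel_adj, mem_insert, mem_singleton]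
  constructor
  · rintro ⟨-, (rfl | rfl) | (rfl | rfl)⟩
    · right; left; abel
    · right; right; rw [sub_add_cancel_left, neg_natCast_self]
    · left; abel
    · right; right; abel
  · rintro (h | h | h) <;> rw [sub_eq_iff_eq_add] at h <;> subst h
    · exact ⟨by simpa using h1, Or.inr (Or.inl (add_comm _ _))⟩
    · exact ⟨by simpa using h1, Or.inl (Or.inl (by abel))⟩
    · exact ⟨by simpa using hn, Or.inr (Or.inr (add_comm _ _))⟩

theorem one_ne_neg_one (hn : 2 ≤ n) : (1 : ZMod (2 * n)) ≠ -1 :=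
  have : Fact (2 < 2 * n) := ⟨by omega⟩
  ZMod.neg_one_ne_one.symm

theorem one_ne_natCast (hn : 2 ≤ n) : (1 : ZMod (2 * n)) ≠ n := by
  rw [ne_comm, ← sub_ne_zero]
  have h := ZMod.natCast_ne_zero_of_pos_of_lt (N := 2 * n) (a := n - 1) (by omega) (by omega)
  rwa [Nat.cast_sub (by omega), Nat.cast_one] at h

theorem neg_one_ne_natCast (hn : 2 ≤ n) : (-1 : ZMod (2 * n)) ≠ n := by
  rw [ne_comm, ← sub_ne_zero, sub_neg_eq_add]
  exact_mod_cast ZMod.natCast_ne_zero_of_pos_of_lt (N := 2 * n) (a := n + 1) (by omega) (by omega)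

theorem eigenvalue_eq [NeZero n] (hn : 2 ≤ n) (j : ℕ) :
    (#(connectionSet n) : ℂ) -
        ∑ s ∈ connectionSet n, AddChar.zmodAddEquiv (j : ZMod (2 * n)) (-s) =
      ((3 + (-1) ^ (j + 1) - 2 * Real.cos (Real.pi * j / n) : ℝ) : ℂ) := by
  have hS : #(connectionSet n) = 3 := by
    simp [connectionSet, one_ne_neg_one hn, one_ne_natCast hn, neg_one_ne_natCast hn]
  have hsum : ∑ s ∈ connectionSet n, AddChar.zmodAddEquiv (j : ZMod (2 * n)) (-s) =
      AddChar.zmodAddEquiv ((j : ℤ) : ZMod (2 * n)) ((-1 : ℤ) : ZMod (2 * n)) +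
      AddChar.zmodAddEquiv ((j : ℤ) : ZMod (2 * n)) ((1 : ℤ) : ZMod (2 * n)) +
      AddChar.zmodAddEquiv ((j : ℤ) : ZMod (2 * n)) ((-n : ℤ) : ZMod (2 * n)) := by
    rw [connectionSet, Finset.sum_insert (by simp [one_ne_neg_one hn, one_ne_natCast hn]),
      Finset.sum_insert (by simp [neg_one_ne_natCast hn]), Finset.sum_singleton]
    push_cast
    rw [neg_neg, add_assoc]
  simp only [hsum, hS, AddChar.zmodAddEquiv_intCast_apply_intCast]
  have hcos := Complex.two_cos (Real.pi * j / n)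
  have hsign : Complex.exp (-(Real.pi * Complex.I)) ^ j = (-1) ^ j := by
    rw [Complex.exp_neg, Complex.exp_pi_mul_I, inv_neg, inv_one]
  rw [← Complex.exp_nat_mul] at hsign
  have hn0 : (n : ℂ) ≠ 0 := by exact_mod_cast NeZero.ne n
  push_cast at hcos ⊢
  field_simp at hcos hsign ⊢
  rw [hcos, hsign]
  ring

theorem charpoly_lapMat_map [NeZero n] (hn : 2 ≤ n) :
    (lapMat (mobiusLadder n)).charpoly.map Complex.ofRealHom = ∏ j ∈ range (2 * n),
      (X - C ((3 + (-1) ^ (j + 1) - 2 * Real.cos (Real.pi * j / n) : ℝ) : ℂ)) := by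
  rw [charpoly_lapMat_map_of_adj_iff_sub_mem _ _ adj_iff,
    ← AddChar.zmodAddEquiv.toEquiv.prod_comp, ZMod.prod_eq_prod_range]
  exact prod_congr rfl fun j _ => by rw [← eigenvalue_eq hn j]; rfl

end MobiusLadder

/-- For `n ≥ 2`, the multiset of eigenvalues (roots of the
characteristic polynomial) of the Laplacian matrix of the Möbius ladder `M n` is
`{3 + (−1)^(j+1) − 2cos(πj/n) : j = 0,…,2n−1}`. -/
theorem mobius_laplacian_spectrum (n : ℕ) [NeZero n] (hn : 2 ≤ n) :
    (lapMat (mobiusLadder n)).charpoly.roots =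
      (Multiset.range (2 * n)).map
        (fun j : ℕ => 3 + (-1 : ℝ) ^ (j + 1) - 2 * Real.cos (Real.pi * j / n)) := by
  refine roots_eq_of_map_eq_prod_X_sub_C (f := Complex.ofRealHom) Complex.ofReal_injective ?_
  rw [MobiusLadder.charpoly_lapMat_map hn, Finset.prod_eq_multiset_prod, Multiset.map_map]
  rfl
end

section
/- There is no family of non-negatively curved 3-regular expanders in the Ollivier-Ricci sense: if (G_i)_{i∈ℕ} is a sequence of finite simple 3-regular graphs with |V(G_i)| → ∞ such that every edge xy of every G_i satisfies κ₀(x,y) ≥ 0, then there is no ε > 0 with λ₁(G_i) ≥ ε for all i; equivalently, lim inf_i λ₁(G_i) = 0. -/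
open Finset

variable {V : Type*}

/-!
Nonnegative Ollivier–Ricci curvature `κ₀` forces every edge of a cubic graph into a triangle or a
4-cycle: otherwise a 1-Lipschitz test function shows `W₁(μ_x, μ_y) ≥ 4/3`.

In a connected cubic graph with that property the distance spheres around a vertex `x₀` have
bounded size. Call a vertex a *fork* if it has one parent, no neighbour at its own distance and
two children. The 4-cycle through a fork and its parent yields a child of the fork with a second
parent; charge the fork to that child. Beyond distance two a vertex with two parents is never
charged twice, since the two forks would share a parent that is itself a fork with three
children. Counting parents, children and charges sphere by sphere shows that the number of edges
from sphere `ℓ` to sphere `ℓ + 1`, minus the number of forks on sphere `ℓ`, does not increase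
from `ℓ = 2` on, while forks account for at most half of those edges.

Hence some ball holds between a third and two thirds of the `n` vertices and has at most `54`
boundary edges, and the test function `n · 1_B − |B|` bounds `λ₁` by `486 / n`.
-/

open SimpleGraph Matrix

namespace Matrix.IsHermitian

lemma dotProduct_eq_sum_eigenvectorBasis {n : Type*} [Fintype n] [DecidableEq n]
    {A : Matrix n n ℝ} (hA : A.IsHermitian) (x y : n → ℝ) :
    x ⬝ᵥ y = ∑ i, (⇑(hA.eigenvectorBasis i) ⬝ᵥ x) * (⇑(hA.eigenvectorBasis i) ⬝ᵥ y) := by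
  have := hA.eigenvectorBasis.sum_inner_mul_inner (WithLp.toLp 2 x) (WithLp.toLp 2 y)
  simp only [EuclideanSpace.inner_eq_star_dotProduct, star_trivial] at this
  simpa [dotProduct_comm y] using this.symm

end Matrix.IsHermitian

namespace SimpleGraph

variable {V : Type*}

lemma card_interedges_eq_sum {G : SimpleGraph V} [DecidableRel G.Adj] (s t : Finset V) :
    #(G.interedges s t) = ∑ a ∈ s, #{b ∈ t | G.Adj a b} := by
  simp_rw [interedges_def, card_filter, sum_product]

lemma card_interedges_eq_sum' {G : SimpleGraph V} [DecidableRel G.Adj] (s t : Finset V) :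
    #(G.interedges s t) = ∑ b ∈ t, #{a ∈ s | G.Adj a b} :=
  (card_interedges_eq_sum s t).trans (sum_card_bipartiteAbove_eq_sum_card_bipartiteBelow _)

lemma dist_le_dist_add_one_of_adj {G : SimpleGraph V} {x₀ a b : V} (h : G.Adj a b) :
    G.dist x₀ b ≤ G.dist x₀ a + 1 := by
  rcases h.diff_dist_adj (u := x₀) with h' | h' | h' <;> omega

section Spectrum

variable [Fintype V] [DecidableEq V] (G : SimpleGraph V) [DecidableRel G.Adj]

lemma lapMat_eq_lapMatrix : lapMat G = G.lapMatrix ℝ := by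
  ext i j
  rw [lapMatrix, degMatrix, Matrix.sub_apply, diagonal_apply, adjMatrix_apply, lapMat,
    G.degree_eq_sum_if_adj (R := ℝ)]
  congr!

lemma nonneg_of_lapMatrix_mulVec_eq_smul {t : ℝ} {v : V → ℝ} (hv : v ≠ 0)
    (h : G.lapMatrix ℝ *ᵥ v = t • v) : 0 ≤ t := by
  have hq := (posSemidef_lapMatrix ℝ G).dotProduct_mulVec_nonneg v
  rw [h, star_trivial, dotProduct_smul, smul_eq_mul] at hq
  exact nonneg_of_mul_nonneg_left hq (by simpa using dotProduct_self_star_pos_iff.2 hv)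

lemma lambdaOne_le_of_mulVec_eq_smul {t : ℝ} {v : V → ℝ} (ht : t ≠ 0) (hv : v ≠ 0)
    (h : G.lapMatrix ℝ *ᵥ v = t • v) : lambdaOne G ≤ t := by
  refine csInf_le ⟨0, ?_⟩ ⟨ht, v, hv, G.lapMat_eq_lapMatrix ▸ h⟩
  rintro s ⟨-, w, hw, hs⟩
  exact G.nonneg_of_lapMatrix_mulVec_eq_smul hw (G.lapMat_eq_lapMatrix ▸ hs)

theorem lambdaOne_mul_dotProduct_le (hG : G.Connected) {f : V → ℝ} (hf : ∑ v, f v = 0) :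
    lambdaOne G * (f ⬝ᵥ f) ≤ f ⬝ᵥ (G.lapMatrix ℝ *ᵥ f) := by
  set hL := G.isHermitian_lapMatrix ℝ
  set e : V → V → ℝ := fun i => ⇑(hL.eigenvectorBasis i)
  have he : ∀ i, G.lapMatrix ℝ *ᵥ e i = hL.eigenvalues i • e i := hL.mulVec_eigenvectorBasis
  have hparseval : ∀ x y : V → ℝ, x ⬝ᵥ y = ∑ i, (e i ⬝ᵥ x) * (e i ⬝ᵥ y) :=
    hL.dotProduct_eq_sum_eigenvectorBasis
  have hcoef : ∀ i, e i ⬝ᵥ (G.lapMatrix ℝ *ᵥ f) = hL.eigenvalues i * (e i ⬝ᵥ f) := by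
    intro i
    rw [dotProduct_mulVec, ← mulVec_transpose, (isSymm_lapMatrix ℝ G).eq, he, smul_dotProduct,
      smul_eq_mul]
  have hterm : ∀ i, lambdaOne G * (e i ⬝ᵥ f) ^ 2 ≤ hL.eigenvalues i * (e i ⬝ᵥ f) ^ 2 := by
    intro i
    by_cases hc : e i ⬝ᵥ f = 0
    · simp [hc]
    refine mul_le_mul_of_nonneg_right (G.lambdaOne_le_of_mulVec_eq_smul ?_ ?_ (he i)) (sq_nonneg _)
    · -- a zero eigenvalue has a constant eigenvector, which is orthogonal to `f`
      intro h0
      have hconst := (lapMatrix_mulVec_eq_zero_iff_forall_reachable G).1 (by rw [he, h0, zero_smul])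
      obtain ⟨x₀⟩ := hG.nonempty
      apply hc
      simp only [dotProduct, fun v => hconst v x₀ (hG.preconnected v x₀), ← mul_sum, hf, mul_zero]
    · rintro h0
      exact hc (by rw [h0, zero_dotProduct])
  calc lambdaOne G * (f ⬝ᵥ f) = ∑ i, lambdaOne G * (e i ⬝ᵥ f) ^ 2 := by
        rw [hparseval, mul_sum]; simp only [sq]
    _ ≤ ∑ i, hL.eigenvalues i * (e i ⬝ᵥ f) ^ 2 := sum_le_sum fun i _ => hterm i
    _ = f ⬝ᵥ (G.lapMatrix ℝ *ᵥ f) := by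
        rw [hparseval f]; simp only [hcoef]
        exact sum_congr rfl fun i _ => by ring

lemma lapMatrix_mulVec_indicator_of_mem {A : Finset V} {v : V} (hv : v ∈ A) :
    (G.lapMatrix ℝ *ᵥ fun u => if u ∈ A then 1 else 0) v = #{u ∈ Aᶜ | G.Adj v u} := by
  rw [lapMatrix_mulVec_apply, sum_boole, ← card_neighborFinset_eq_degree,
    ← card_filter_add_card_filter_not (· ∈ A), if_pos hv]
  push_cast
  ring_nf
  congr 2
  ext u
  simp [and_comm]

lemma dotProduct_lapMatrix_mulVec_indicator (A : Finset V) :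
    (fun u => if u ∈ A then 1 else 0) ⬝ᵥ (G.lapMatrix ℝ *ᵥ fun u => if u ∈ A then 1 else 0) =
      #(G.interedges A Aᶜ) := by
  simp only [dotProduct, ite_mul, one_mul, zero_mul, sum_ite_mem, univ_inter]
  rw [sum_congr rfl fun v hv => G.lapMatrix_mulVec_indicator_of_mem hv, card_interedges_eq_sum]
  push_cast; rfl

theorem lambdaOne_mul_card_mul_card_compl_le (hG : G.Connected) (A : Finset V) :
    lambdaOne G * (#A * #Aᶜ) ≤ Fintype.card V * #(G.interedges A Aᶜ) := by
  set n : ℝ := (Fintype.card V : ℝ)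
  set a : ℝ := (#A : ℝ)
  set g : V → ℝ := fun u => if u ∈ A then 1 else 0
  set f : V → ℝ := fun u => n * g u - a
  have hcompl : (#Aᶜ : ℝ) = n - a := by rw [card_compl, Nat.cast_sub (card_le_univ A)]
  have hf : ∑ v, f v = 0 := by
    simp only [f, g, sum_sub_distrib, ← mul_sum, sum_boole, filter_mem_eq_inter, univ_inter,
      sum_const, card_univ, nsmul_eq_mul]
    ring
  have hff : f ⬝ᵥ f = n * (a * #Aᶜ) := by
    have : ∀ v, f v * f v = if v ∈ A then (n - a) ^ 2 else a ^ 2 := fun v => by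
      simp only [f, g]; split_ifs <;> ring
    simp only [dotProduct, this, sum_ite, filter_mem_eq_inter, univ_inter, sum_const, nsmul_eq_mul]
    rw [show ({v | v ∉ A} : Finset V) = Aᶜ by ext; simp, hcompl]
    ring
  have hquad : ∀ x : V → ℝ, x ⬝ᵥ (G.lapMatrix ℝ *ᵥ x) =
      (∑ i, ∑ j, if G.Adj i j then (x i - x j) ^ 2 else 0) / 2 := fun x => by
    rw [← toLinearMap₂'_apply', lapMatrix_toLinearMap₂']
  have hfLf : f ⬝ᵥ (G.lapMatrix ℝ *ᵥ f) = n ^ 2 * #(G.interedges A Aᶜ) := by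
    rw [← G.dotProduct_lapMatrix_mulVec_indicator, hquad, hquad, mul_div_assoc', mul_sum]
    congr 1
    refine sum_congr rfl fun i _ => ?_
    rw [mul_sum]
    refine sum_congr rfl fun j _ => ?_
    simp only [f, g]
    split_ifs <;> ring
  have hn : 0 < n := by
    obtain ⟨x⟩ := hG.nonempty
    exact Nat.cast_pos.2 (Fintype.card_pos_iff.2 ⟨x⟩)
  have := G.lambdaOne_mul_dotProduct_le hG hf
  rw [hff, hfLf] at this
  exact le_of_mul_le_mul_left (by linarith) hn

end Spectrum

lemma lambdaOne_nonneg [Fintype V] (G : SimpleGraph V) : 0 ≤ lambdaOne G := by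
  classical
  refine Real.sInf_nonneg ?_
  rintro t ⟨-, v, hv, h⟩
  exact G.nonneg_of_lapMatrix_mulVec_eq_smul hv (G.lapMat_eq_lapMatrix ▸ h)

def EdgesInTrianglesOrSquares (G : SimpleGraph V) : Prop :=
  ∀ ⦃x y : V⦄, G.Adj x y →
    (∃ w, G.Adj x w ∧ G.Adj y w) ∨ ∃ u v, G.Adj x u ∧ G.Adj y v ∧ G.Adj u v ∧ u ≠ y ∧ v ≠ x

section Transport

variable {G : SimpleGraph V} [G.LocallyFinite]

lemma sum_mul_muZero (x : V) (ψ : V → ℝ) :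
    ∑ u ∈ G.neighborFinset x, ψ u * muZero G x u =
      (∑ u ∈ G.neighborFinset x, ψ u) / G.degree x := by
  rw [sum_div]
  refine sum_congr rfl fun u hu => ?_
  rw [muZero, if_pos ((mem_neighborFinset _ _ _).1 hu), mul_one_div]

lemma sum_muZero {x : V} (hx : G.degree x ≠ 0) : ∑ u ∈ G.neighborFinset x, muZero G x u = 1 := by
  simpa [hx] using sum_mul_muZero (G := G) x 1

lemma sum_sub_sum_le_Wone {x y : V} (hx : G.degree x ≠ 0) (hy : G.degree y ≠ 0) (ψ : V → ℝ)
    (hψ : ∀ u v, G.Adj x u → G.Adj y v → ψ u - ψ v ≤ G.dist u v) :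
    ∑ u ∈ G.neighborFinset x, ψ u * muZero G x u -
      ∑ v ∈ G.neighborFinset y, ψ v * muZero G y v ≤ Wone G x y := by
  have hμ : ∀ z u, 0 ≤ muZero G z u := fun z u => by unfold muZero; split_ifs <;> positivity
  refine le_csInf ⟨_, fun u v => muZero G x u * muZero G y v,
    fun u v => mul_nonneg (hμ x u) (hμ y v), fun u v h => ?_, fun u => by rw [← mul_sum, sum_muZero hy, mul_one],
    fun v => by rw [← sum_mul, sum_muZero hx, one_mul], rfl⟩ ?_
  · constructor <;> by_contra hn <;> simp [muZero, hn] at h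
  · rintro w ⟨π, hπ, hsupp, hπx, hπy, rfl⟩
    calc _ = ∑ u ∈ G.neighborFinset x, ∑ v ∈ G.neighborFinset y, (ψ u - ψ v) * π u v := by
          simp only [sub_mul, sum_sub_distrib, ← mul_sum, hπx]
          rw [sum_comm]
          simp only [← mul_sum, hπy]
      _ ≤ _ := by
        refine sum_le_sum fun u _ => sum_le_sum fun v _ => ?_
        by_cases h0 : π u v = 0
        · simp [h0]
        obtain ⟨hu, hv⟩ := hsupp u v h0
        exact mul_le_mul_of_nonneg_right (hψ u v hu hv) (hπ u v)

theorem edgesInTrianglesOrSquares_of_kappaZero_nonneg (hG : G.Connected)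
    (hcubic : G.IsRegularOfDegree 3) (hκ : ∀ x y, G.Adj x y → 0 ≤ kappaZero G x y) :
    G.EdgesInTrianglesOrSquares := by
  classical
  intro x y hxy
  by_contra! h
  obtain ⟨hnotri, hnosq⟩ := h
  -- 1-Lipschitz on the two supports, with mean `5/3` on `N(x)` and `1/3` on `N(y)`
  let ψ : V → ℝ := fun z => if z = x ∨ z = y then 1 else if G.Adj x z then 2 else 0
  have hψx : ψ x = 1 := by simp [ψ]
  have hψy : ψ y = 1 := by simp [ψ]
  have hψu : ∀ u ∈ (G.neighborFinset x).erase y, ψ u = 2 := fun u hu => by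
    obtain ⟨huy, hu⟩ := mem_erase.1 hu
    rw [mem_neighborFinset] at hu
    simp [ψ, hu, huy, hu.ne.symm]
  have hψv : ∀ v ∈ (G.neighborFinset y).erase x, ψ v = 0 := fun v hv => by
    obtain ⟨hvx, hv⟩ := mem_erase.1 hv
    rw [mem_neighborFinset] at hv
    simp only [ψ, hvx, hv.ne.symm, or_self, if_false, ite_eq_right_iff]
    exact fun h => (hnotri v h hv).elim
  have hψ : ∀ u v, G.Adj x u → G.Adj y v → ψ u - ψ v ≤ G.dist u v := by
    intro u v hu hv
    rcases eq_or_ne u y with rfl | huy <;> rcases eq_or_ne v x with rfl | hvx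
    · simp [hψx, hψy]
    · rw [hψy, hψv v (mem_erase.2 ⟨hvx, (mem_neighborFinset _ _ _).2 hv⟩), dist_eq_one_iff_adj.2 hv]
      norm_num
    · rw [hψx, hψu u (mem_erase.2 ⟨huy, (mem_neighborFinset _ _ _).2 hu⟩),
        dist_eq_one_iff_adj.2 hu.symm]
      norm_num
    · rw [hψu u (mem_erase.2 ⟨huy, (mem_neighborFinset _ _ _).2 hu⟩),
        hψv v (mem_erase.2 ⟨hvx, (mem_neighborFinset _ _ _).2 hv⟩)]
      have h2 : 1 < G.dist u v := hG.one_lt_dist_of_ne_of_not_adj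
        (by rintro rfl; exact hnotri u hu hv) (fun huv => hvx (hnosq u v hu hv huv huy))
      have : (2 : ℝ) ≤ G.dist u v := by exact_mod_cast h2
      linarith
  have hsumx : ∑ u ∈ G.neighborFinset x, ψ u = 5 := by
    rw [← add_sum_erase _ _ ((mem_neighborFinset _ _ _).2 hxy), hψy, sum_congr rfl hψu, sum_const,
      card_erase_of_mem ((mem_neighborFinset _ _ _).2 hxy), card_neighborFinset_eq_degree,
      hcubic.degree_eq]
    norm_num
  have hsumy : ∑ v ∈ G.neighborFinset y, ψ v = 1 := by
    rw [← add_sum_erase _ _ ((mem_neighborFinset _ _ _).2 hxy.symm), hψx, sum_congr rfl hψv,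
      sum_const_zero, add_zero]
  have hW := sum_sub_sum_le_Wone (by simp [hcubic.degree_eq]) (by simp [hcubic.degree_eq]) ψ hψ
  rw [sum_mul_muZero, sum_mul_muZero, hsumx, hsumy, hcubic.degree_eq, hcubic.degree_eq] at hW
  have := hκ x y hxy
  rw [kappaZero] at this
  norm_num at hW
  linarith

end Transport

section BreadthFirstLayers

variable (G : SimpleGraph V) [G.LocallyFinite] (x₀ : V)

noncomputable def parents (t : V) : Finset V :=
  {s ∈ G.neighborFinset t | G.dist x₀ s + 1 = G.dist x₀ t}

noncomputable def peers (t : V) : Finset V :=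
  {s ∈ G.neighborFinset t | G.dist x₀ s = G.dist x₀ t}

noncomputable def children (t : V) : Finset V :=
  {s ∈ G.neighborFinset t | G.dist x₀ s = G.dist x₀ t + 1}

def IsFork (z : V) : Prop := G.dist x₀ z ≠ 0 ∧ #(G.parents x₀ z) = 1 ∧ #(G.peers x₀ z) = 0

noncomputable instance : DecidablePred (G.IsFork x₀) := fun _ =>
  inferInstanceAs (Decidable (_ ∧ _ ∧ _))

def IsSquareChild (z v : V) : Prop :=
  v ∈ G.children x₀ z ∧ ∃ u ≠ z, u ∈ G.parents x₀ v ∧ ∃ x ∈ G.parents x₀ z, G.Adj x u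

open Classical in
noncomputable def forkChild (z : V) : V :=
  if h : ∃ v, G.IsSquareChild x₀ z v then h.choose else z

variable {G x₀} {s t z : V}

lemma mem_parents : s ∈ G.parents x₀ t ↔ G.Adj t s ∧ G.dist x₀ s + 1 = G.dist x₀ t := by
  simp [parents]

lemma mem_peers : s ∈ G.peers x₀ t ↔ G.Adj t s ∧ G.dist x₀ s = G.dist x₀ t := by
  simp [peers]

lemma mem_children : s ∈ G.children x₀ t ↔ G.Adj t s ∧ G.dist x₀ s = G.dist x₀ t + 1 := by
  simp [children]

lemma mem_parents_of_mem_children (h : s ∈ G.children x₀ t) : t ∈ G.parents x₀ s := by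
  rw [mem_children] at h
  exact mem_parents.2 ⟨h.1.symm, h.2.symm⟩

lemma card_parents_add_card_peers_add_card_children (t : V) :
    #(G.parents x₀ t) + #(G.peers x₀ t) + #(G.children x₀ t) = G.degree t := by
  rw [parents, peers, children, card_filter, card_filter, card_filter, ← sum_add_distrib,
    ← sum_add_distrib, ← card_neighborFinset_eq_degree, card_eq_sum_ones]
  refine sum_congr rfl fun s hs => ?_
  rcases ((mem_neighborFinset _ _ _).1 hs).diff_dist_adj (u := x₀) with h | h | h <;>
    split_ifs <;> omega

lemma parents_nonempty (ht : G.dist x₀ t ≠ 0) : (G.parents x₀ t).Nonempty := by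
  obtain ⟨p, hp⟩ := (Reachable.of_dist_ne_zero ht).symm.exists_walk_length_eq_dist
  cases p with
  | nil => simp at ht
  | cons h q =>
    refine ⟨_, mem_parents.2 ⟨h, ?_⟩⟩
    have hq := dist_le q
    have := dist_le_dist_add_one_of_adj (x₀ := x₀) h.symm
    rw [Walk.length_cons, dist_comm] at hp
    rw [dist_comm] at hq
    omega

lemma IsFork.exists_isSquareChild (hTS : G.EdgesInTrianglesOrSquares) (hz : G.IsFork x₀ z) :
    ∃ v, G.IsSquareChild x₀ z v := by
  obtain ⟨hz0, hpar, hpeer⟩ := hz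
  obtain ⟨x, hx⟩ := parents_nonempty hz0
  have hx' := mem_parents.1 hx
  have hparent : ∀ s, G.Adj z s → G.dist x₀ s + 1 = G.dist x₀ z → s = x := fun s hs hs' =>
    card_le_one.1 hpar.le s (mem_parents.2 ⟨hs, hs'⟩) x hx
  have hnopeer : ∀ s, G.Adj z s → G.dist x₀ s ≠ G.dist x₀ z := fun s hs hs' =>
    notMem_empty s (card_eq_zero.1 hpeer ▸ mem_peers.2 ⟨hs, hs'⟩)
  rcases hTS hx'.1.symm with ⟨w, hxw, hzw⟩ | ⟨u, v, hxu, hzv, huv, huz, hvx⟩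
  · exfalso
    have := dist_le_dist_add_one_of_adj (x₀ := x₀) hxw
    rcases hzw.diff_dist_adj (u := x₀) with h | h | h
    · exact hnopeer w hzw h
    · omega
    · exact hxw.ne (hparent w hzw (by omega)).symm
  · have hv : G.dist x₀ v = G.dist x₀ z + 1 := by
      rcases hzv.diff_dist_adj (u := x₀) with h | h | h
      · exact absurd h (hnopeer v hzv)
      · exact h
      · exact absurd (hparent v hzv (by omega)) hvx
    have := dist_le_dist_add_one_of_adj (x₀ := x₀) hxu
    have := dist_le_dist_add_one_of_adj (x₀ := x₀) huv
    exact ⟨v, mem_children.2 ⟨hzv, hv⟩, u, huz, mem_parents.2 ⟨huv.symm, by omega⟩, x, hx, hxu⟩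

lemma IsFork.isSquareChild_forkChild (hTS : G.EdgesInTrianglesOrSquares) (hz : G.IsFork x₀ z) :
    G.IsSquareChild x₀ z (G.forkChild x₀ z) := by
  have h := hz.exists_isSquareChild hTS
  rw [forkChild, dif_pos h]
  exact h.choose_spec

lemma IsFork.two_le_card_parents_forkChild (hTS : G.EdgesInTrianglesOrSquares)
    (hz : G.IsFork x₀ z) : 2 ≤ #(G.parents x₀ (G.forkChild x₀ z)) := by
  obtain ⟨hv, u, huz, hu, -⟩ := hz.isSquareChild_forkChild hTS
  exact one_lt_card.2 ⟨z, mem_parents_of_mem_children hv, u, hu, huz.symm⟩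

lemma IsFork.card_children (hcubic : G.IsRegularOfDegree 3) (hz : G.IsFork x₀ z) :
    #(G.children x₀ z) = 2 := by
  have := card_parents_add_card_peers_add_card_children (G := G) (x₀ := x₀) z
  rw [hz.2.1, hz.2.2, hcubic.degree_eq] at this
  omega

lemma eq_of_isFork_of_mem_children (hTS : G.EdgesInTrianglesOrSquares)
    (hcubic : G.IsRegularOfDegree 3) {x z z' : V} (hx : G.dist x₀ x ≠ 0)
    (hz : G.IsFork x₀ z) (hz' : G.IsFork x₀ z') (hzx : z ∈ G.children x₀ x)
    (hz'x : z' ∈ G.children x₀ x) : z = z' := by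
  by_contra hne
  have hsum := card_parents_add_card_peers_add_card_children (G := G) (x₀ := x₀) x
  rw [hcubic.degree_eq] at hsum
  have h2 : 2 ≤ #(G.children x₀ x) := one_lt_card.2 ⟨z, hzx, z', hz'x, hne⟩
  have h1 := (parents_nonempty hx).card_pos
  have hxfork : G.IsFork x₀ x := ⟨hx, by omega, by omega⟩
  have hw := (hxfork.isSquareChild_forkChild hTS).1
  have hwz : ∀ y, G.IsFork x₀ y → G.forkChild x₀ x ≠ y := fun y hy h => by
    have := hxfork.two_le_card_parents_forkChild hTS
    rw [h, hy.2.1] at this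
    omega
  have : 2 < #(G.children x₀ x) :=
    two_lt_card.2 ⟨z, hzx, z', hz'x, _, hw, hne, (hwz z hz).symm, (hwz z' hz').symm⟩
  omega

end BreadthFirstLayers

section Counting

variable [Fintype V] (G : SimpleGraph V) (x₀ : V)

noncomputable def distSphere (ℓ : ℕ) : Finset V := {v | G.dist x₀ v = ℓ}

noncomputable def distBall (r : ℕ) : Finset V := {v | G.dist x₀ v ≤ r}

variable {G x₀} in
lemma mem_distSphere {v : V} {ℓ : ℕ} : v ∈ G.distSphere x₀ ℓ ↔ G.dist x₀ v = ℓ := by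
  simp [distSphere]

variable {G x₀} in
lemma mem_distBall {v : V} {r : ℕ} : v ∈ G.distBall x₀ r ↔ G.dist x₀ v ≤ r := by
  simp [distBall]

variable {G x₀} in
lemma distSphere_zero (hG : G.Connected) : G.distSphere x₀ 0 = {x₀} := by
  ext v
  rw [mem_distSphere, mem_singleton, hG.dist_eq_zero_iff, eq_comm]

variable [DecidableEq V] [G.LocallyFinite]

noncomputable def forkFiber (t : V) : Finset V := {z | G.IsFork x₀ z ∧ G.forkChild x₀ z = t}

noncomputable def forkCount (ℓ : ℕ) : ℕ := #{z ∈ G.distSphere x₀ ℓ | G.IsFork x₀ z}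

variable {G x₀} {t : V}

lemma mem_forkFiber {z : V} : z ∈ G.forkFiber x₀ t ↔ G.IsFork x₀ z ∧ G.forkChild x₀ z = t := by
  simp [forkFiber]

lemma forkFiber_subset_parents (hTS : G.EdgesInTrianglesOrSquares) :
    G.forkFiber x₀ t ⊆ G.parents x₀ t := fun z hz => by
  obtain ⟨hzf, rfl⟩ := mem_forkFiber.1 hz
  exact mem_parents_of_mem_children (hzf.isSquareChild_forkChild hTS).1

lemma two_le_card_parents_of_forkFiber_nonempty (hTS : G.EdgesInTrianglesOrSquares)
    (h : (G.forkFiber x₀ t).Nonempty) : 2 ≤ #(G.parents x₀ t) := by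
  obtain ⟨z, hz⟩ := h
  obtain ⟨hzf, rfl⟩ := mem_forkFiber.1 hz
  exact hzf.two_le_card_parents_forkChild hTS

lemma card_forkFiber_le_one (hTS : G.EdgesInTrianglesOrSquares) (hcubic : G.IsRegularOfDegree 3)
    (ht : 3 ≤ G.dist x₀ t) (hpar : #(G.parents x₀ t) = 2) : #(G.forkFiber x₀ t) ≤ 1 := by
  refine card_le_one.2 fun z hz z' hz' => ?_
  by_contra hne
  obtain ⟨hzf, hzt⟩ := mem_forkFiber.1 hz
  obtain ⟨hz'f, hz't⟩ := mem_forkFiber.1 hz'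
  obtain ⟨hzc, u, huz, hu, x, hx, hxu⟩ := hzf.isSquareChild_forkChild hTS
  rw [hzt] at hzc hu
  have hz'p := forkFiber_subset_parents hTS hz'
  have hzp := mem_parents_of_mem_children hzc
  have hu' : u = z' := by
    by_contra hu'
    have : 2 < #(G.parents x₀ t) :=
      two_lt_card.2 ⟨z, hzp, z', hz'p, u, hu, hne, Ne.symm huz, Ne.symm hu'⟩
    omega
  subst hu'
  have hx' := mem_parents.1 hx
  have hzp' := mem_parents.1 hzp
  have hup := mem_parents.1 hu
  exact hne (eq_of_isFork_of_mem_children hTS hcubic (x := x) (by omega) hzf hz'f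
    (mem_children.2 ⟨hx'.1.symm, by omega⟩) (mem_children.2 ⟨hxu, by omega⟩))

lemma card_children_add_card_forkFiber_le (hTS : G.EdgesInTrianglesOrSquares)
    (hcubic : G.IsRegularOfDegree 3) (ht : 3 ≤ G.dist x₀ t) :
    #(G.children x₀ t) + #(G.forkFiber x₀ t) ≤
      #(G.parents x₀ t) + if G.IsFork x₀ t then 1 else 0 := by
  have hsum := card_parents_add_card_peers_add_card_children (G := G) (x₀ := x₀) t
  rw [hcubic.degree_eq] at hsum
  have hpar := (parents_nonempty (G := G) (x₀ := x₀) (t := t) (by omega)).card_pos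
  have hfib := card_le_card (forkFiber_subset_parents (x₀ := x₀) (t := t) hTS)
  have hfib2 : 0 < #(G.forkFiber x₀ t) → 2 ≤ #(G.parents x₀ t) := fun h =>
    two_le_card_parents_of_forkFiber_nonempty hTS (card_pos.1 h)
  split_ifs with hfork
  · have := hfork.card_children hcubic
    have := hfork.2.1
    omega
  · have hnf : ¬ (#(G.parents x₀ t) = 1 ∧ #(G.peers x₀ t) = 0) := fun h =>
      hfork ⟨by omega, h⟩
    by_cases h2 : #(G.parents x₀ t) = 2
    · have := card_forkFiber_le_one hTS hcubic ht h2
      omega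
    · omega

lemma sum_card_forkFiber (hTS : G.EdgesInTrianglesOrSquares) (ℓ : ℕ) :
    ∑ t ∈ G.distSphere x₀ (ℓ + 1), #(G.forkFiber x₀ t) = G.forkCount x₀ ℓ := by
  have hchild : ∀ z, G.IsFork x₀ z → G.forkChild x₀ z ∈ G.children x₀ z := fun z hz =>
    (hz.isSquareChild_forkChild hTS).1
  rw [forkCount, card_eq_sum_card_fiberwise (f := G.forkChild x₀) fun z hz => ?_]
  · refine (sum_congr rfl fun t ht => congrArg card (ext fun z => ?_)).symm
    rw [mem_distSphere] at ht
    simp only [mem_forkFiber, mem_filter, mem_distSphere]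
    constructor
    · rintro ⟨⟨-, hz⟩, rfl⟩
      exact ⟨hz, rfl⟩
    · rintro ⟨hz, rfl⟩
      exact ⟨⟨by have := (mem_children.1 (hchild z hz)).2; omega, hz⟩, rfl⟩
  · obtain ⟨hz, hzf⟩ := mem_filter.1 hz
    rw [mem_coe, mem_distSphere, (mem_children.1 (hchild z hzf)).2, (mem_distSphere.1 hz)]

end Counting

section Layers

variable [Fintype V] (G : SimpleGraph V) [DecidableRel G.Adj] (x₀ : V)

noncomputable def layerEdges (ℓ : ℕ) : ℕ :=
  #(G.interedges (G.distSphere x₀ ℓ) (G.distSphere x₀ (ℓ + 1)))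

variable {G x₀}

lemma card_interedges_distBall_compl [DecidableEq V] (r : ℕ) :
    #(G.interedges (G.distBall x₀ r) (G.distBall x₀ r)ᶜ) = G.layerEdges x₀ r := by
  rw [layerEdges]
  congr 1
  ext ⟨a, b⟩
  simp only [mk_mem_interedges_iff, mem_compl, mem_distBall, mem_distSphere, not_le]
  constructor
  · rintro ⟨ha, hb, hab⟩
    have := dist_le_dist_add_one_of_adj (x₀ := x₀) hab
    exact ⟨by omega, by omega, hab⟩
  · rintro ⟨ha, hb, hab⟩
    exact ⟨ha.le, by omega, hab⟩

variable [G.LocallyFinite]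

lemma sum_card_children (ℓ : ℕ) :
    ∑ s ∈ G.distSphere x₀ ℓ, #(G.children x₀ s) = G.layerEdges x₀ ℓ := by
  rw [layerEdges, card_interedges_eq_sum]
  refine sum_congr rfl fun s hs => congrArg card (ext fun b => ?_)
  rw [mem_distSphere] at hs
  simp [mem_children, mem_distSphere, hs, and_comm]

lemma sum_card_parents (ℓ : ℕ) :
    ∑ t ∈ G.distSphere x₀ (ℓ + 1), #(G.parents x₀ t) = G.layerEdges x₀ ℓ := by
  rw [layerEdges, card_interedges_eq_sum']
  refine sum_congr rfl fun t ht => congrArg card (ext fun a => ?_)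
  rw [mem_distSphere] at ht
  simp only [mem_parents, mem_filter, mem_distSphere, ht]
  constructor
  · rintro ⟨h, h'⟩; exact ⟨by omega, h.symm⟩
  · rintro ⟨h, h'⟩; exact ⟨h'.symm, by omega⟩

lemma two_mul_forkCount_le (hcubic : G.IsRegularOfDegree 3) (ℓ : ℕ) :
    2 * G.forkCount x₀ ℓ ≤ G.layerEdges x₀ ℓ := by
  rw [← sum_card_children, forkCount, mul_comm, ← smul_eq_mul, ← sum_const]
  calc ∑ _z ∈ {z ∈ G.distSphere x₀ ℓ | G.IsFork x₀ z}, 2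
      = ∑ z ∈ {z ∈ G.distSphere x₀ ℓ | G.IsFork x₀ z}, #(G.children x₀ z) :=
        sum_congr rfl fun z hz => ((mem_filter.1 hz).2.card_children hcubic).symm
    _ ≤ _ := sum_le_sum_of_subset (filter_subset _ _)

lemma card_distSphere_succ_le (ℓ : ℕ) : #(G.distSphere x₀ (ℓ + 1)) ≤ G.layerEdges x₀ ℓ := by
  rw [← sum_card_parents, card_eq_sum_ones]
  exact sum_le_sum fun t ht =>
    (parents_nonempty (by rw [mem_distSphere.1 ht]; omega)).card_pos

lemma layerEdges_le (hcubic : G.IsRegularOfDegree 3) (ℓ : ℕ) :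
    G.layerEdges x₀ ℓ ≤ 3 * #(G.distSphere x₀ ℓ) := by
  rw [← sum_card_children, mul_comm, ← smul_eq_mul]
  refine sum_le_card_nsmul _ _ _ fun s _ => ?_
  rw [← hcubic.degree_eq s, ← card_neighborFinset_eq_degree]
  exact card_filter_le _ _

variable [DecidableEq V]

lemma layerEdges_succ_add_forkCount_le (hTS : G.EdgesInTrianglesOrSquares)
    (hcubic : G.IsRegularOfDegree 3) {ℓ : ℕ} (hℓ : 2 ≤ ℓ) :
    G.layerEdges x₀ (ℓ + 1) + G.forkCount x₀ ℓ ≤ G.layerEdges x₀ ℓ + G.forkCount x₀ (ℓ + 1) := by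
  rw [← sum_card_children, ← sum_card_forkFiber hTS, ← sum_card_parents, forkCount, card_filter,
    ← sum_add_distrib, ← sum_add_distrib]
  exact sum_le_sum fun t ht =>
    card_children_add_card_forkFiber_le hTS hcubic (by rw [mem_distSphere.1 ht]; omega)

lemma layerEdges_le_54 (hG : G.Connected) (hTS : G.EdgesInTrianglesOrSquares)
    (hcubic : G.IsRegularOfDegree 3) (ℓ : ℕ) : G.layerEdges x₀ ℓ ≤ 54 := by
  have hE : ∀ ℓ, G.layerEdges x₀ (ℓ + 1) ≤ 3 * G.layerEdges x₀ ℓ := fun ℓ =>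
    (layerEdges_le hcubic _).trans (by have := card_distSphere_succ_le (G := G) (x₀ := x₀) ℓ; omega)
  have hE0 : G.layerEdges x₀ 0 ≤ 3 := by
    simpa [distSphere_zero hG] using layerEdges_le (x₀ := x₀) hcubic 0
  have hE1 : G.layerEdges x₀ 1 ≤ 9 := (hE 0).trans (by omega)
  have hE2 : G.layerEdges x₀ 2 ≤ 27 := (hE 1).trans (by omega)
  have hmono : ∀ ℓ, 2 ≤ ℓ → G.layerEdges x₀ ℓ + G.forkCount x₀ 2 ≤
      G.layerEdges x₀ 2 + G.forkCount x₀ ℓ := by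
    refine Nat.le_induction le_rfl fun ℓ hℓ ih => ?_
    have := layerEdges_succ_add_forkCount_le (x₀ := x₀) hTS hcubic hℓ
    omega
  rcases lt_or_ge ℓ 2 with hℓ | hℓ
  · interval_cases ℓ <;> omega
  · have := hmono ℓ hℓ
    have := two_mul_forkCount_le (x₀ := x₀) hcubic ℓ
    omega

lemma card_distSphere_le_54 (hG : G.Connected) (hTS : G.EdgesInTrianglesOrSquares)
    (hcubic : G.IsRegularOfDegree 3) (ℓ : ℕ) : #(G.distSphere x₀ ℓ) ≤ 54 := by
  cases ℓ with
  | zero => simp [distSphere_zero hG]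
  | succ ℓ => exact (card_distSphere_succ_le ℓ).trans (layerEdges_le_54 hG hTS hcubic ℓ)

end Layers

lemma exists_balanced_distBall [Fintype V] [DecidableEq V] (G : SimpleGraph V) (x₀ : V) {K : ℕ}
    (hK : ∀ ℓ, #(G.distSphere x₀ ℓ) ≤ K) (hn : 3 * K ≤ Fintype.card V) :
    ∃ r, Fintype.card V ≤ 3 * #(G.distBall x₀ r) ∧ Fintype.card V ≤ 3 * #(G.distBall x₀ r)ᶜ := by
  have hex : ∃ r, Fintype.card V ≤ 3 * #(G.distBall x₀ r) := by
    refine ⟨univ.sup (G.dist x₀), ?_⟩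
    rw [eq_univ_of_forall fun v => mem_distBall.2 (le_sup (mem_univ v)), card_univ]
    omega
  set r := Nat.find hex with hr
  refine ⟨r, Nat.find_spec hex, ?_⟩
  have hsplit : #(G.distBall x₀ r) ≤ #{v | G.dist x₀ v < r} + #(G.distSphere x₀ r) := by
    refine (card_le_card fun v hv => ?_).trans (card_union_le _ _)
    rw [mem_distBall] at hv
    simp only [mem_union, mem_filter, mem_univ, true_and, mem_distSphere]
    omega
  -- minimality of `r`: the ball of radius `r - 1` holds less than a third of the vertices
  have hinner : 3 * #{v | G.dist x₀ v < r} ≤ Fintype.card V := by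
    rcases Nat.eq_zero_or_pos r with h0 | hpos
    · simp [h0]
    · have hmin := Nat.find_min hex (Nat.sub_lt hpos one_pos)
      rw [← hr] at hmin
      have hsub : ({v | G.dist x₀ v < r} : Finset V) ⊆ G.distBall x₀ (r - 1) := fun v hv => by
        rw [mem_distBall]
        rw [mem_filter] at hv
        omega
      have := card_le_card hsub
      omega
  have := hK r
  have := card_le_univ (G.distBall x₀ r)
  rw [card_compl]
  omega

theorem lambdaOne_le_of_edgesInTrianglesOrSquares [Fintype V] {G : SimpleGraph V} [G.LocallyFinite]
    (hG : G.Connected) (hcubic : G.IsRegularOfDegree 3) (hTS : G.EdgesInTrianglesOrSquares)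
    (hn : 162 ≤ Fintype.card V) : lambdaOne G ≤ 486 / Fintype.card V := by
  classical
  obtain ⟨x₀⟩ := hG.nonempty
  obtain ⟨r, hA, hAc⟩ :=
    exists_balanced_distBall G x₀ (card_distSphere_le_54 hG hTS hcubic) (by omega)
  have hcheeger := G.lambdaOne_mul_card_mul_card_compl_le hG (G.distBall x₀ r)
  rw [card_interedges_distBall_compl] at hcheeger
  have hE : (G.layerEdges x₀ r : ℝ) ≤ 54 := by exact_mod_cast layerEdges_le_54 hG hTS hcubic r
  have hA' : (Fintype.card V : ℝ) ≤ 3 * #(G.distBall x₀ r) := by exact_mod_cast hA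
  have hAc' : (Fintype.card V : ℝ) ≤ 3 * #(G.distBall x₀ r)ᶜ := by exact_mod_cast hAc
  have hn0 : (0 : ℝ) < Fintype.card V := Nat.cast_pos.2 (by omega)
  have hnn : (Fintype.card V : ℝ) * Fintype.card V ≤
      9 * (#(G.distBall x₀ r) * #(G.distBall x₀ r)ᶜ) := by
    nlinarith
  rw [le_div_iff₀ hn0]
  nlinarith [lambdaOne_nonneg G]

end SimpleGraph

/-- There is no family of non-negatively curved 3-regular expanders in
the Ollivier–Ricci sense: for a sequence of finite connected simple 3-regular graphs with
`|V(Gᵢ)| → ∞` and `κ₀ ≥ 0` on every edge, no `ε > 0` satisfies `λ₁(Gᵢ) ≥ ε` for all `i`;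
equivalently `liminf λ₁(Gᵢ) = 0`. -/
theorem no_ollivier_nonneg_cubic_expanders (V : ℕ → Type) [∀ i, Fintype (V i)]
    (G : ∀ i, SimpleGraph (V i)) [∀ i, ∀ v : V i, Fintype ((G i).neighborSet v)]
    (hconn : ∀ i, (G i).Connected)
    (hcubic : ∀ i (v : V i), (G i).degree v = 3)
    (hcard : Filter.Tendsto (fun i => Fintype.card (V i)) Filter.atTop Filter.atTop)
    (hcurv : ∀ i (x y : V i), (G i).Adj x y → 0 ≤ kappaZero (G i) x y) :
    (¬ ∃ ε : ℝ, 0 < ε ∧ ∀ i, ε ≤ lambdaOne (G i)) ∧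
      Filter.liminf (fun i => lambdaOne (G i)) Filter.atTop = 0 := by
  have hbound : ∀ᶠ i in Filter.atTop, lambdaOne (G i) ≤ 486 / Fintype.card (V i) :=
    (hcard.eventually_ge_atTop 162).mono fun i hi =>
      lambdaOne_le_of_edgesInTrianglesOrSquares (hconn i) (hcubic i)
        (edgesInTrianglesOrSquares_of_kappaZero_nonneg (hconn i) (hcubic i) (hcurv i)) hi
  have hlim : Filter.Tendsto (fun i => lambdaOne (G i)) Filter.atTop (nhds 0) :=
    squeeze_zero' (Filter.Eventually.of_forall fun i => lambdaOne_nonneg (G i)) hbound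
      ((tendsto_const_div_atTop_nhds_zero_nat 486).comp hcard)
  exact ⟨fun ⟨ε, hε, h⟩ => hε.not_ge (ge_of_tendsto' hlim h), hlim.liminf_eq⟩
end

section
/- Let G be a finite simple 3-regular triangle-free graph in which every edge lies on a 4-cycle, and suppose G contains the ladder L_n (n ≥ 3) as a subgraph on vertices a_1,…,a_n,b_1,…,b_n with edges a_i a_{i+1}, b_i b_{i+1} (1 ≤ i ≤ n−1) and a_i b_i (1 ≤ i ≤ n), where the vertices a_2,…,a_{n−1},b_2,…,b_{n−1} already have all three of their neighbours inside the ladder. Then exactly one of the following holds: (i) a_1 ∼ a_n and b_1 ∼ b_n (so G contains and equals the prism Y_n), (ii) a_1 ∼ b_n and b_1 ∼ a_n (so G contains and equals the Möbius ladder M_n), or (iii) G contains the ladder L_{n+1} as a subgraph extending the given one. -/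
open Finset

variable {V : Type*}

/-! Let `a'` and `b'` be the third neighbours of the ends `a (n - 1)` and `b (n - 1)`. Since the
interior of the ladder is saturated, a neighbour of `a (n - 1)` inside the ladder can only be `a 0`
or `b 0`, and each of the three alternatives pins down `a'` (as `a 0`, `b 0`, or a vertex off the
ladder), which makes them mutually exclusive.

If `a'` is `a 0` or `b 0`, then `a'` and `a (n - 1)` are saturated too, so the 4-cycle through the
edge `b (n - 1) b'` has no way to leave the ladder (for `n = 3` this needs triangle-freeness): `b'`
lies in the ladder, hence is the other one of `a 0`, `b 0` (it is not `a'`, as there are no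
triangles). Now every ladder vertex is saturated, so by connectivity the ladder is all of `G`, and
closing it up straight or crosswise gives the prism or the Möbius ladder.

If `a'` and `b'` both lie outside, the 4-cycle through `a (n - 1) a'` must be
`a (n - 1) a' b' b (n - 1)`, unless `n = 3` and `a 0 ∼ a'`, `b 0 ∼ b'`; but then the third
neighbour of `a'` lies on no 4-cycle with `a'`.
-/

namespace SimpleGraph

def IsThirdNeighbor (G : SimpleGraph V) (v x y z : V) : Prop :=
  G.Adj v z ∧ z ≠ x ∧ z ≠ y ∧ ∀ w, G.Adj v w → w = x ∨ w = y ∨ w = z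

theorem IsThirdNeighbor.eq_of_adj {G : SimpleGraph V} {v x y z w : V}
    (h : G.IsThirdNeighbor v x y z) (hw : G.Adj v w) (hwx : w ≠ x) (hwy : w ≠ y) : w = z :=
  ((h.2.2.2 w hw).resolve_left hwx).resolve_left hwy

theorem IsThirdNeighbor.neighborSet_subset {G : SimpleGraph V} {v x y z : V} {s : Set V}
    (h : G.IsThirdNeighbor v x y z) (hx : x ∈ s) (hy : y ∈ s) (hz : z ∈ s) :
    G.neighborSet v ⊆ s := by
  intro w hw
  rcases h.2.2.2 w hw with rfl | rfl | rfl <;> assumption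

section Cubic

variable {G : SimpleGraph V} {v x y z : V} [Fintype (G.neighborSet v)]

theorem eq_or_eq_or_eq_of_adj_of_degree_eq_three (hd : G.degree v = 3)
    (hxy : x ≠ y) (hxz : x ≠ z) (hyz : y ≠ z) (hx : G.Adj v x) (hy : G.Adj v y)
    (hz : G.Adj v z) : ∀ ⦃w⦄, G.Adj v w → w = x ∨ w = y ∨ w = z := by
  classical
  have hN : ({x, y, z} : Finset V) = G.neighborFinset v :=
    eq_of_subset_of_card_le (by simp [insert_subset_iff, hx, hy, hz])
      (by rw [card_neighborFinset_eq_degree, hd, card_eq_three.2 ⟨x, y, z, hxy, hxz, hyz, rfl⟩])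
  intro w hw
  simpa [← hN] using (G.mem_neighborFinset v w).2 hw

theorem exists_isThirdNeighbor (hd : G.degree v = 3) (hxy : x ≠ y) (hx : G.Adj v x)
    (hy : G.Adj v y) : ∃ z, G.IsThirdNeighbor v x y z := by
  classical
  have hsub : ({x, y} : Finset V) ⊆ G.neighborFinset v := by
    simp [insert_subset_iff, hx, hy]
  obtain ⟨z, hz⟩ : (G.neighborFinset v \ {x, y}).Nonempty := by
    rw [← card_pos, card_sdiff_of_subset hsub, card_neighborFinset_eq_degree, hd,
      card_pair hxy]
    norm_num
  simp only [mem_sdiff, mem_neighborFinset, mem_insert, mem_singleton, not_or] at hz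
  obtain ⟨hz, hzx, hzy⟩ := hz
  exact ⟨z, hz, hzx, hzy, eq_or_eq_or_eq_of_adj_of_degree_eq_three hd hxy
    (Ne.symm hzx) (Ne.symm hzy) hx hy hz⟩

theorem three_le_degree_of_adj (hxy : x ≠ y) (hxz : x ≠ z) (hyz : y ≠ z) (hx : G.Adj v x)
    (hy : G.Adj v y) (hz : G.Adj v z) : 3 ≤ G.degree v := by
  classical
  rw [← card_neighborFinset_eq_degree, ← card_eq_three.2 ⟨x, y, z, hxy, hxz, hyz, rfl⟩]
  exact card_le_card (by simp [insert_subset_iff, hx, hy, hz])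

end Cubic

theorem nonempty_iso_of_bijective_of_degree_le {W : Type*} {G : SimpleGraph V}
    {H : SimpleGraph W} [∀ v, Fintype (G.neighborSet v)] [∀ w, Fintype (H.neighborSet w)]
    (f : H →g G) (hf : Function.Bijective f) (hdeg : ∀ w, G.degree (f w) ≤ H.degree w) :
    Nonempty (G ≃g H) := by
  classical
  have hN : ∀ w, G.neighborFinset (f w) = (H.neighborFinset w).image f := fun w =>
    (eq_of_subset_of_card_le (by simpa [image_subset_iff] using fun _ => f.map_adj)
      (by simpa [card_image_of_injective _ hf.injective] using hdeg w)).symm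
  refine ⟨(RelIso.mk (Equiv.ofBijective f hf) fun {v w} => ⟨fun h => ?_, f.map_adj⟩).symm⟩
  have : f w ∈ G.neighborFinset (f v) := (G.mem_neighborFinset _ _).2 h
  simpa [hN, hf.injective.eq_iff] using this

theorem Reachable.mem_of_forall_adj {G : SimpleGraph V} {s : Set V} {u v : V}
    (h : G.Reachable u v) (hs : ∀ x ∈ s, ∀ y, G.Adj x y → y ∈ s) (hu : u ∈ s) :
    v ∈ s := by
  obtain ⟨p⟩ := h
  induction p with
  | nil => exact hu
  | cons hxy _ ih => exact ih (hs _ hu _ hxy)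

theorem adj_val_add_one {G : SimpleGraph V} {m : ℕ} [NeZero m] {c : ℕ → V}
    (hpath : ∀ i, i + 1 < m → G.Adj (c i) (c (i + 1))) (hclose : G.Adj (c (m - 1)) (c 0))
    (k : ZMod m) : G.Adj (c k.val) (c (k + 1).val) := by
  have hm : 1 < m := by
    by_contra h
    obtain rfl : m = 1 := by have := NeZero.ne m; omega
    exact hclose.ne rfl
  have : Fact (1 < m) := ⟨hm⟩
  have hk := ZMod.val_lt k
  rw [ZMod.val_add, ZMod.val_one]
  rcases Nat.lt_or_ge (k.val + 1) m with h | h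
  · rw [Nat.mod_eq_of_lt h]
    exact hpath _ h
  · rw [show k.val = m - 1 by omega, Nat.sub_add_cancel hm.le, Nat.mod_self]
    exact hclose

end SimpleGraph

theorem ZMod.natCast_ne_zero_of_lt {m k : ℕ} (hk0 : 0 < k) (hk : k < m) : (k : ZMod m) ≠ 0 := by
  rw [Ne, ZMod.natCast_eq_zero_iff]
  exact fun h => absurd (Nat.le_of_dvd hk0 h) (by omega)

namespace SimpleGraph

theorem three_le_degree_prismGraph {n : ℕ} [NeZero n] (hn : 3 ≤ n) (p : ZMod n × Bool) :
    3 ≤ (prismGraph n).degree p := by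
  have h1 : (1 : ZMod n) ≠ 0 := by
    exact_mod_cast ZMod.natCast_ne_zero_of_lt (k := 1) one_pos (by omega)
  have h2 : (2 : ZMod n) ≠ 0 := by
    exact_mod_cast ZMod.natCast_ne_zero_of_lt (k := 2) two_pos (by omega)
  obtain ⟨i, s⟩ := p
  refine three_le_degree_of_adj (x := (i + 1, s)) (y := (i - 1, s)) (z := (i, !s))
    ?_ ?_ ?_ ?_ ?_ ?_
  all_goals simp [prismGraph, Prod.ext_iff, eq_sub_iff_add_eq, add_assoc, one_add_one_eq_two,
    h1, h2]

theorem three_le_degree_mobiusLadder {n : ℕ} [NeZero (2 * n)] (hn : 2 ≤ n) (p : ZMod (2 * n)) :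
    3 ≤ (mobiusLadder n).degree p := by
  have hne {k : ℕ} (hk0 : 0 < k) (hk : k < 2 * n) : (k : ZMod (2 * n)) ≠ 0 :=
    ZMod.natCast_ne_zero_of_lt hk0 hk
  have h1 : (1 : ZMod (2 * n)) ≠ 0 := by exact_mod_cast hne (k := 1) one_pos (by omega)
  have h2 : (2 : ZMod (2 * n)) ≠ 0 := by exact_mod_cast hne (k := 2) two_pos (by omega)
  have hn0 : (n : ZMod (2 * n)) ≠ 0 := hne (by omega) (by omega)
  have hn1 : (n : ZMod (2 * n)) ≠ 1 := by
    have := hne (k := n - 1) (by omega) (by omega)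
    rw [Nat.cast_sub (by omega), Nat.cast_one, sub_ne_zero] at this
    exact this
  have hn2 : (n + 1 : ZMod (2 * n)) ≠ 0 := by
    exact_mod_cast hne (k := n + 1) (by omega) (by omega)
  refine three_le_degree_of_adj (x := p + 1) (y := p - 1) (z := p + n) (fun h => h2 ?_)
    (fun h => hn1 ?_) (fun h => hn2 ?_) ?_ ?_ ?_
  · linear_combination h
  · linear_combination -h
  · linear_combination -h
  all_goals simp [mobiusLadder, eq_sub_iff_add_eq, h1, hn0]

def EdgesInFourCycles (G : SimpleGraph V) : Prop :=
  ∀ x y, G.Adj x y → ∃ u v, G.Adj x u ∧ G.Adj u v ∧ G.Adj v y ∧ u ≠ y ∧ v ≠ x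

/-- The ladder `L_n` with vertices `a 0, …, a (n - 1)`, `b 0, …, b (n - 1)` (indexed from `0`),
whose interior vertices have all three neighbours in the ladder. -/
structure IsSaturatedLadder (G : SimpleGraph V) (n : ℕ) (a b : ℕ → V) : Prop where
  a_inj : ∀ i < n, ∀ j < n, a i = a j → i = j
  b_inj : ∀ i < n, ∀ j < n, b i = b j → i = j
  a_ne_b : ∀ i < n, ∀ j < n, a i ≠ b j
  adj_rung : ∀ i < n, G.Adj (a i) (b i)
  adj_a_succ : ∀ i, i + 1 < n → G.Adj (a i) (a (i + 1))
  adj_b_succ : ∀ i, i + 1 < n → G.Adj (b i) (b (i + 1))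
  a_saturated : ∀ i, 0 < i → i + 1 < n →
    ∀ w, G.Adj (a i) w → w = a (i - 1) ∨ w = a (i + 1) ∨ w = b i
  b_saturated : ∀ i, 0 < i → i + 1 < n →
    ∀ w, G.Adj (b i) w → w = b (i - 1) ∨ w = b (i + 1) ∨ w = a i

def ladderVerts (n : ℕ) (a b : ℕ → V) : Set V := {v | ∃ i < n, v = a i ∨ v = b i}

theorem ladderVerts_comm (n : ℕ) (a b : ℕ → V) : ladderVerts n b a = ladderVerts n a b := by
  ext v
  simp only [ladderVerts, Set.mem_ofPred_eq, or_comm]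

theorem notMem_ladderVerts_iff {n : ℕ} {a b : ℕ → V} {x : V} :
    x ∉ ladderVerts n a b ↔ ∀ i < n, x ≠ a i ∧ x ≠ b i := by
  simp [ladderVerts, not_or]

namespace IsSaturatedLadder

variable {G : SimpleGraph V} {n : ℕ} {a b : ℕ → V} {a' b' : V}

theorem swap (L : G.IsSaturatedLadder n a b) : G.IsSaturatedLadder n b a where
  a_inj := L.b_inj
  b_inj := L.a_inj
  a_ne_b i hi j hj := (L.a_ne_b j hj i hi).symm
  adj_rung i hi := (L.adj_rung i hi).symm
  adj_a_succ := L.adj_b_succ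
  adj_b_succ := L.adj_a_succ
  a_saturated := L.b_saturated
  b_saturated := L.a_saturated

theorem exists_isThirdNeighbor_last [∀ v, Fintype (G.neighborSet v)]
    (L : G.IsSaturatedLadder n a b) (hcubic : G.IsRegularOfDegree 3) (hn : 2 ≤ n) :
    ∃ a', G.IsThirdNeighbor (a (n - 1)) (a (n - 2)) (b (n - 1)) a' :=
  exists_isThirdNeighbor (hcubic.degree_eq _) (L.a_ne_b _ (by omega) _ (by omega))
    (by simpa [show n - 2 + 1 = n - 1 by omega] using (L.adj_a_succ (n - 2) (by omega)).symm)
    (L.adj_rung _ (by omega))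

theorem eq_a_zero_of_adj (L : G.IsSaturatedLadder n a b) (hn : 3 ≤ n)
    (ha' : G.IsThirdNeighbor (a (n - 1)) (a (n - 2)) (b (n - 1)) a')
    (h : G.Adj (a (n - 1)) (a 0)) : a' = a 0 :=
  (ha'.eq_of_adj h (fun e => by have := L.a_inj _ (by omega) _ (by omega) e; omega)
    (L.a_ne_b _ (by omega) _ (by omega))).symm

theorem eq_b_zero_of_adj (L : G.IsSaturatedLadder n a b) (hn : 2 ≤ n)
    (ha' : G.IsThirdNeighbor (a (n - 1)) (a (n - 2)) (b (n - 1)) a')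
    (h : G.Adj (a (n - 1)) (b 0)) : a' = b 0 :=
  (ha'.eq_of_adj h (L.a_ne_b _ (by omega) _ (by omega)).symm
    (fun e => by have := L.b_inj _ (by omega) _ (by omega) e; omega)).symm

theorem neighborSet_a_subset (L : G.IsSaturatedLadder n a b) {i : ℕ} (hi0 : 0 < i)
    (hi : i + 1 < n) : G.neighborSet (a i) ⊆ ladderVerts n a b := by
  intro w hw
  rcases L.a_saturated i hi0 hi w hw with rfl | rfl | rfl
  exacts [⟨i - 1, by omega, .inl rfl⟩, ⟨i + 1, hi, .inl rfl⟩, ⟨i, by omega, .inr rfl⟩]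

theorem neighborSet_b_subset (L : G.IsSaturatedLadder n a b) {i : ℕ} (hi0 : 0 < i)
    (hi : i + 1 < n) : G.neighborSet (b i) ⊆ ladderVerts n a b :=
  ladderVerts_comm n a b ▸ L.swap.neighborSet_a_subset hi0 hi

theorem eq_or_eq_of_mem (L : G.IsSaturatedLadder n a b) (hn : 2 ≤ n)
    (ha' : G.IsThirdNeighbor (a (n - 1)) (a (n - 2)) (b (n - 1)) a')
    (ha'S : a' ∈ ladderVerts n a b) : a' = a 0 ∨ a' = b 0 := by
  obtain ⟨hadj, hne_a, hne_b, -⟩ := ha'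
  obtain ⟨i, hi, rfl | rfl⟩ := ha'S
  · rcases Nat.eq_zero_or_pos i with rfl | hi0
    · exact .inl rfl
    have hin : i + 1 < n := by
      by_contra
      exact hadj.ne (by congr 1; omega)
    rcases L.a_saturated i hi0 hin _ hadj.symm with h | h | h
    · have := L.a_inj _ (by omega) _ (by omega) h
      omega
    · have := L.a_inj _ (by omega) _ (by omega) h
      exact (hne_a (by congr 1; omega)).elim
    · exact (L.a_ne_b _ (by omega) _ hi h).elim
  · rcases Nat.eq_zero_or_pos i with rfl | hi0
    · exact .inr rfl
    have hin : i + 1 < n := by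
      by_contra
      exact hne_b (by congr 1; omega)
    rcases L.b_saturated i hi0 hin _ hadj.symm with h | h | h
    · exact (L.a_ne_b _ (by omega) _ (by omega) h).elim
    · exact (L.a_ne_b _ (by omega) _ (by omega) h).elim
    · have := L.a_inj _ (by omega) _ hi h
      omega

theorem neighborSet_a_zero_subset [∀ v, Fintype (G.neighborSet v)]
    (L : G.IsSaturatedLadder n a b) (hcubic : G.IsRegularOfDegree 3) (hn : 3 ≤ n)
    (h : G.Adj (a 0) (a (n - 1)) ∨ G.Adj (a 0) (b (n - 1))) :
    G.neighborSet (a 0) ⊆ ladderVerts n a b := by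
  obtain ⟨x, hx, hxS, hx1, hx0⟩ :
      ∃ x, G.Adj (a 0) x ∧ x ∈ ladderVerts n a b ∧ x ≠ a 1 ∧ x ≠ b 0 := by
    rcases h with h | h
    · refine ⟨_, h, ⟨n - 1, by omega, .inl rfl⟩, fun e => ?_,
        L.a_ne_b _ (by omega) _ (by omega)⟩
      have := L.a_inj _ (by omega) _ (by omega) e
      omega
    · refine ⟨_, h, ⟨n - 1, by omega, .inr rfl⟩,
        fun e => L.a_ne_b _ (by omega) _ (by omega) e.symm, fun e => ?_⟩
      have := L.b_inj _ (by omega) _ (by omega) e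
      omega
  intro w hw
  rcases eq_or_eq_or_eq_of_adj_of_degree_eq_three (hcubic.degree_eq _)
    (L.a_ne_b 1 (by omega) 0 (by omega)) hx1.symm hx0.symm (L.adj_a_succ 0 (by omega))
    (L.adj_rung 0 (by omega)) hx hw with rfl | rfl | rfl
  exacts [⟨1, by omega, .inl rfl⟩, ⟨0, by omega, .inr rfl⟩, hxS]

theorem mem_of_eq_or_eq [∀ v, Fintype (G.neighborSet v)] (L : G.IsSaturatedLadder n a b)
    (hcubic : G.IsRegularOfDegree 3) (htf : G.CliqueFree 3) (hsq : G.EdgesInFourCycles)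
    (hn : 3 ≤ n) (ha' : G.IsThirdNeighbor (a (n - 1)) (a (n - 2)) (b (n - 1)) a')
    (ha'S : a' = a 0 ∨ a' = b 0)
    (hb' : G.IsThirdNeighbor (b (n - 1)) (b (n - 2)) (a (n - 1)) b') :
    b' ∈ ladderVerts n a b := by
  by_contra hb'S
  have ha'N : G.neighborSet a' ⊆ ladderVerts n a b := by
    rcases ha'S with rfl | rfl
    · exact L.neighborSet_a_zero_subset hcubic hn (.inl ha'.1.symm)
    · exact ladderVerts_comm n a b ▸
        L.swap.neighborSet_a_zero_subset hcubic hn (.inr ha'.1.symm)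
  obtain ⟨u, v, hu, huv, hvb', hub', hvb⟩ := hsq _ _ hb'.1
  have hv : ¬G.neighborSet v ⊆ ladderVerts n a b := fun h => hb'S (h hvb')
  rcases hb'.2.2.2 u hu with rfl | rfl | rfl
  · rcases L.b_saturated (n - 2) (by omega) (by omega) v huv with rfl | rfl | rfl
    · rcases (by omega : n = 3 ∨ 4 ≤ n) with rfl | hn4
      · rcases ha'S with rfl | rfl
        · classical
          exact htf {a 0, a 1, a 2} (is3Clique_triple_iff.2
            ⟨L.adj_a_succ 0 (by omega), ha'.1.symm, L.adj_a_succ 1 (by omega)⟩)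
        · exact hv ha'N
      · exact hv (L.neighborSet_b_subset (by omega) (by omega))
    · exact hvb (by congr 1; omega)
    · exact hv (L.neighborSet_a_subset (by omega) (by omega))
  · rcases ha'.2.2.2 v huv with rfl | rfl | rfl
    · exact hv (L.neighborSet_a_subset (by omega) (by omega))
    · exact hvb rfl
    · exact hv ha'N
  · exact hub' rfl

theorem thirdNeighbors_eq_of_mem [∀ v, Fintype (G.neighborSet v)]
    (L : G.IsSaturatedLadder n a b)
    (hcubic : G.IsRegularOfDegree 3) (htf : G.CliqueFree 3) (hsq : G.EdgesInFourCycles)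
    (hn : 3 ≤ n) (ha' : G.IsThirdNeighbor (a (n - 1)) (a (n - 2)) (b (n - 1)) a')
    (hb' : G.IsThirdNeighbor (b (n - 1)) (b (n - 2)) (a (n - 1)) b')
    (ha'S : a' ∈ ladderVerts n a b) : a' = a 0 ∧ b' = b 0 ∨ a' = b 0 ∧ b' = a 0 := by
  have ha'0 := L.eq_or_eq_of_mem (by omega) ha' ha'S
  have hb'0 := L.swap.eq_or_eq_of_mem (by omega) hb'
    (ladderVerts_comm n a b ▸ L.mem_of_eq_or_eq hcubic htf hsq hn ha' ha'0 hb')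
  have hne : a' ≠ b' := by
    rintro rfl
    classical
    exact htf {a (n - 1), b (n - 1), a'} (is3Clique_triple_iff.2
      ⟨L.adj_rung _ (by omega), ha'.1, hb'.1⟩)
  rcases ha'0 with rfl | rfl <;> rcases hb'0 with rfl | rfl <;> simp_all

theorem eq_three_and_adj_of_not_adj (L : G.IsSaturatedLadder n a b)
    (hsq : G.EdgesInFourCycles) (hn : 3 ≤ n)
    (ha' : G.IsThirdNeighbor (a (n - 1)) (a (n - 2)) (b (n - 1)) a')
    (hb' : G.IsThirdNeighbor (b (n - 1)) (b (n - 2)) (a (n - 1)) b')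
    (ha'S : a' ∉ ladderVerts n a b) (hab' : ¬G.Adj a' b') : n = 3 ∧ G.Adj (a 0) a' := by
  obtain ⟨u, v, hu, huv, hva', hua', hva⟩ := hsq _ _ ha'.1
  have hv : ¬G.neighborSet v ⊆ ladderVerts n a b := fun h => ha'S (h hva')
  rcases ha'.2.2.2 u hu with rfl | rfl | rfl
  · rcases L.a_saturated (n - 2) (by omega) (by omega) v huv with rfl | rfl | rfl
    · rcases (by omega : n = 3 ∨ 4 ≤ n) with rfl | hn4
      · exact ⟨rfl, hva'⟩
      · exact (hv (L.neighborSet_a_subset (by omega) (by omega))).elim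
    · exact (hva (by congr 1; omega)).elim
    · exact (hv (L.neighborSet_b_subset (by omega) (by omega))).elim
  · rcases hb'.2.2.2 v huv with rfl | rfl | rfl
    · exact (hv (L.neighborSet_b_subset (by omega) (by omega))).elim
    · exact (hva rfl).elim
    · exact (hab' hva'.symm).elim
  · exact (hua' rfl).elim

theorem adj_of_eq_three [∀ v, Fintype (G.neighborSet v)] (L : G.IsSaturatedLadder 3 a b)
    (hcubic : G.IsRegularOfDegree 3) (hsq : G.EdgesInFourCycles)
    (ha' : G.IsThirdNeighbor (a 2) (a 1) (b 2) a') (ha'0 : G.Adj (a 0) a')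
    (hb' : G.IsThirdNeighbor (b 2) (b 1) (a 2) b') (hb'0 : G.Adj (b 0) b')
    (ha'S : a' ∉ ladderVerts 3 a b) (hb'S : b' ∉ ladderVerts 3 a b) : G.Adj a' b' := by
  by_contra hab'
  have hNa0 := eq_or_eq_or_eq_of_adj_of_degree_eq_three (hcubic.degree_eq _)
    (L.a_ne_b 1 (by omega) 0 (by omega)) (fun h => ha'S ⟨1, by omega, .inl h.symm⟩)
    (fun h => ha'S ⟨0, by omega, .inr h.symm⟩) (L.adj_a_succ 0 (by omega))
    (L.adj_rung 0 (by omega)) ha'0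
  have hNb0 := eq_or_eq_or_eq_of_adj_of_degree_eq_three (hcubic.degree_eq _)
    (L.a_ne_b 0 (by omega) 1 (by omega)).symm (fun h => hb'S ⟨1, by omega, .inr h.symm⟩)
    (fun h => hb'S ⟨0, by omega, .inl h.symm⟩) (L.adj_b_succ 0 (by omega))
    (L.adj_rung 0 (by omega)).symm hb'0
  obtain ⟨t, hta', hta2, hta0, hNa'⟩ := exists_isThirdNeighbor (hcubic.degree_eq a')
    (fun h => by simpa using L.a_inj 2 (by omega) 0 (by omega) h) ha'.1.symm ha'0.symm
  have htb1 : t ≠ b 1 := by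
    rintro rfl
    rcases L.b_saturated 1 (by omega) (by omega) _ hta'.symm with h | h | h
    exacts [ha'S ⟨0, by omega, .inr h⟩, ha'S ⟨2, by omega, .inr h⟩,
      ha'S ⟨1, by omega, .inl h⟩]
  -- the 4-cycle `a' u v t` has `v ∈ {a 1, b 0, b 2}`, all of whose neighbours are among
  -- `a 0`, `a 2`, `b 1`, `b'`, and none of these can be `t`
  obtain ⟨u, v, hu, huv, hvt, hut, hva'⟩ := hsq _ _ hta'
  have hv : ∀ w, G.Adj v w → w = a 0 ∨ w = a 2 ∨ w = b 1 ∨ w = b' := by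
    intro w hw
    rcases hNa' u hu with rfl | rfl | rfl
    · rcases ha'.2.2.2 v huv with rfl | rfl | rfl
      · have := L.a_saturated 1 (by omega) (by omega) w hw
        tauto
      · have := hb'.2.2.2 w hw
        tauto
      · exact (hva' rfl).elim
    · rcases hNa0 huv with rfl | rfl | rfl
      · have := L.a_saturated 1 (by omega) (by omega) w hw
        tauto
      · have := hNb0 hw
        tauto
      · exact (hva' rfl).elim
    · exact (hut rfl).elim
  rcases hv t hvt with h | h | h | h
  exacts [hta0 h, hta2 h, htb1 h, hab' (h ▸ hta')]

theorem adj_of_notMem [∀ v, Fintype (G.neighborSet v)] (L : G.IsSaturatedLadder n a b)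
    (hcubic : G.IsRegularOfDegree 3) (hsq : G.EdgesInFourCycles) (hn : 3 ≤ n)
    (ha' : G.IsThirdNeighbor (a (n - 1)) (a (n - 2)) (b (n - 1)) a')
    (hb' : G.IsThirdNeighbor (b (n - 1)) (b (n - 2)) (a (n - 1)) b')
    (ha'S : a' ∉ ladderVerts n a b) (hb'S : b' ∉ ladderVerts n a b) : G.Adj a' b' := by
  by_contra hab'
  obtain ⟨rfl, ha'0⟩ := L.eq_three_and_adj_of_not_adj hsq hn ha' hb' ha'S hab'
  obtain ⟨-, hb'0⟩ := L.swap.eq_three_and_adj_of_not_adj hsq hn hb' ha'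
    (ladderVerts_comm 3 a b ▸ hb'S) (hab' ∘ .symm)
  exact hab' (L.adj_of_eq_three hcubic hsq ha' ha'0 hb' hb'0 ha'S hb'S)

theorem forall_mem_ladderVerts [∀ v, Fintype (G.neighborSet v)]
    (L : G.IsSaturatedLadder n a b)
    (hconn : G.Connected) (hcubic : G.IsRegularOfDegree 3) (hn : 3 ≤ n)
    (ha' : G.IsThirdNeighbor (a (n - 1)) (a (n - 2)) (b (n - 1)) a')
    (hb' : G.IsThirdNeighbor (b (n - 1)) (b (n - 2)) (a (n - 1)) b')
    (hends : a' = a 0 ∧ b' = b 0 ∨ a' = b 0 ∧ b' = a 0) (v : V) :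
    v ∈ ladderVerts n a b := by
  have hS : a' ∈ ladderVerts n a b ∧ b' ∈ ladderVerts n a b := by
    rcases hends with ⟨rfl, rfl⟩ | ⟨rfl, rfl⟩ <;>
      exact ⟨⟨0, by omega, by simp⟩, ⟨0, by omega, by simp⟩⟩
  have ha0 := L.neighborSet_a_zero_subset hcubic hn <| by
    rcases hends with ⟨rfl, rfl⟩ | ⟨rfl, rfl⟩
    exacts [.inl ha'.1.symm, .inr hb'.1.symm]
  have hb0 := ladderVerts_comm n a b ▸ L.swap.neighborSet_a_zero_subset hcubic hn <| by
    rcases hends with ⟨rfl, rfl⟩ | ⟨rfl, rfl⟩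
    exacts [.inl hb'.1.symm, .inr ha'.1.symm]
  have hla : G.neighborSet (a (n - 1)) ⊆ ladderVerts n a b :=
    ha'.neighborSet_subset ⟨n - 2, by omega, .inl rfl⟩ ⟨n - 1, by omega, .inr rfl⟩ hS.1
  have hlb : G.neighborSet (b (n - 1)) ⊆ ladderVerts n a b :=
    hb'.neighborSet_subset ⟨n - 2, by omega, .inr rfl⟩ ⟨n - 1, by omega, .inl rfl⟩ hS.2
  refine (hconn.preconnected (a 0) v).mem_of_forall_adj ?_ ⟨0, by omega, .inl rfl⟩
  rintro x ⟨i, hi, rfl | rfl⟩ y hy <;> rcases Nat.eq_zero_or_pos i with rfl | hi0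
  · exact ha0 hy
  · rcases (by omega : i = n - 1 ∨ i + 1 < n) with rfl | hin
    exacts [hla hy, L.neighborSet_a_subset hi0 hin hy]
  · exact hb0 hy
  · rcases (by omega : i = n - 1 ∨ i + 1 < n) with rfl | hin
    exacts [hlb hy, L.neighborSet_b_subset hi0 hin hy]

theorem nonempty_iso_prismGraph [∀ v, Fintype (G.neighborSet v)]
    (L : G.IsSaturatedLadder n a b) (hcubic : G.IsRegularOfDegree 3) (hn : 3 ≤ n)
    (hall : ∀ v, v ∈ ladderVerts n a b)
    (ha : G.Adj (a (n - 1)) (a 0)) (hb : G.Adj (b (n - 1)) (b 0)) :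
    Nonempty (G ≃g prismGraph n) := by
  have : NeZero n := ⟨by omega⟩
  let f : ZMod n × Bool → V := fun p => cond p.2 (b p.1.val) (a p.1.val)
  have hrel : ∀ p q : ZMod n × Bool,
      (p.2 = q.2 ∧ q.1 = p.1 + 1) ∨ (p.1 = q.1 ∧ p.2 ≠ q.2) → G.Adj (f p) (f q) := by
    rintro ⟨i, s⟩ ⟨j, t⟩ (⟨hst, hij⟩ | ⟨hij, hst⟩) <;> dsimp only at hst hij <;>
      subst hij
    · subst hst
      cases s
      · exact adj_val_add_one L.adj_a_succ ha i
      · exact adj_val_add_one L.adj_b_succ hb i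
    · cases s <;> cases t <;> simp only [ne_eq, not_true_eq_false] at hst
      · exact L.adj_rung _ (ZMod.val_lt i)
      · exact (L.adj_rung _ (ZMod.val_lt i)).symm
  have hf : Function.Bijective f := by
    refine ⟨?_, fun v => ?_⟩
    · rintro ⟨i, s⟩ ⟨j, t⟩ h
      have hi := ZMod.val_lt i
      have hj := ZMod.val_lt j
      cases s <;> cases t <;> simp only [f, cond_false, cond_true] at h
      · rw [ZMod.val_injective n (L.a_inj _ hi _ hj h)]
      · exact (L.a_ne_b _ hi _ hj h).elim
      · exact (L.a_ne_b _ hj _ hi h.symm).elim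
      · rw [ZMod.val_injective n (L.b_inj _ hi _ hj h)]
    · obtain ⟨i, hi, rfl | rfl⟩ := hall v
      · exact ⟨(i, false), by simp [f, ZMod.val_natCast_of_lt hi]⟩
      · exact ⟨(i, true), by simp [f, ZMod.val_natCast_of_lt hi]⟩
  refine nonempty_iso_of_bijective_of_degree_le ⟨f, fun {p q} h => ?_⟩ hf fun p => ?_
  · obtain ⟨-, h | h⟩ := (fromRel_adj _ p q).1 h
    exacts [hrel p q h, (hrel q p h).symm]
  · rw [hcubic.degree_eq]
    exact three_le_degree_prismGraph hn p

theorem nonempty_iso_mobiusLadder [∀ v, Fintype (G.neighborSet v)]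
    (L : G.IsSaturatedLadder n a b) (hcubic : G.IsRegularOfDegree 3) (hn : 2 ≤ n)
    (hall : ∀ v, v ∈ ladderVerts n a b) (ha : G.Adj (a (n - 1)) (b 0))
    (hb : G.Adj (b (n - 1)) (a 0)) : Nonempty (G ≃g mobiusLadder n) := by
  have : NeZero (2 * n) := ⟨by omega⟩
  -- the Hamiltonian cycle `a 0, …, a (n - 1), b 0, …, b (n - 1)` of `M n`
  let c : ℕ → V := fun i => if i < n then a i else b (i - n)
  have hpath : ∀ i, i + 1 < 2 * n → G.Adj (c i) (c (i + 1)) := by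
    intro i hi
    simp only [c]
    rcases Nat.lt_or_ge (i + 1) n with h | h
    · rw [if_pos (by omega), if_pos h]
      exact L.adj_a_succ i h
    · rcases Nat.lt_or_ge i n with h' | h'
      · rw [if_pos h', if_neg (by omega), show i = n - 1 by omega,
          show n - 1 + 1 - n = 0 by omega]
        exact ha
      · rw [if_neg (by omega), if_neg (by omega), show i + 1 - n = i - n + 1 by omega]
        exact L.adj_b_succ _ (by omega)
  have hclose : G.Adj (c (2 * n - 1)) (c 0) := by
    simp only [c]
    rw [if_neg (by omega), if_pos (by omega), show 2 * n - 1 - n = n - 1 by omega]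
    exact hb
  have hchord : ∀ k : ZMod (2 * n), G.Adj (c k.val) (c (k + n).val) := by
    intro k
    have hk := ZMod.val_lt k
    rw [ZMod.val_add, ZMod.val_natCast_of_lt (by omega : n < 2 * n)]
    simp only [c]
    rcases Nat.lt_or_ge k.val n with h | h
    · rw [Nat.mod_eq_of_lt (by omega), if_pos h, if_neg (by omega), Nat.add_sub_cancel]
      exact L.adj_rung _ h
    · rw [show k.val + n = k.val - n + 2 * n by omega, Nat.add_mod_right,
        Nat.mod_eq_of_lt (by omega), if_neg (by omega), if_pos (by omega)]
      exact (L.adj_rung _ (by omega)).symm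
  have hf : Function.Bijective fun k : ZMod (2 * n) => c k.val := by
    refine ⟨fun k l h => ?_, fun v => ?_⟩
    · have hk := ZMod.val_lt k
      have hl := ZMod.val_lt l
      apply ZMod.val_injective
      simp only [c] at h
      split_ifs at h with h1 h2 h2
      · exact L.a_inj _ h1 _ h2 h
      · exact (L.a_ne_b _ h1 _ (by omega) h).elim
      · exact (L.a_ne_b _ h2 _ (by omega) h.symm).elim
      · have := L.b_inj _ (by omega) _ (by omega) h
        omega
    · obtain ⟨i, hi, rfl | rfl⟩ := hall v
      · exact ⟨i, by simp [c, ZMod.val_natCast_of_lt (by omega : i < 2 * n), hi]⟩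
      · refine ⟨(n + i : ℕ), ?_⟩
        simp only [c]
        rw [ZMod.val_natCast_of_lt (by omega), if_neg (by omega), Nat.add_sub_cancel_left]
  refine nonempty_iso_of_bijective_of_degree_le ⟨_, fun {p q} h => ?_⟩ hf fun p => ?_
  · obtain ⟨-, (rfl | rfl) | (rfl | rfl)⟩ := (fromRel_adj _ p q).1 h
    · exact adj_val_add_one hpath hclose p
    · exact hchord p
    · exact (adj_val_add_one hpath hclose q).symm
    · exact (hchord q).symm
  · rw [hcubic.degree_eq]
    exact three_le_degree_mobiusLadder hn p

end IsSaturatedLadder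
end SimpleGraph

theorem ladder_extension_trichotomy_general {V : Type*} (G : SimpleGraph V)
    [∀ v, Fintype (G.neighborSet v)]
    (hconn : G.Connected)
    (hcubic : ∀ v : V, G.degree v = 3)
    (htrianglefree : G.CliqueFree 3)
    (hsquares : ∀ x y : V, G.Adj x y →
      ∃ u v : V, G.Adj x u ∧ G.Adj u v ∧ G.Adj v y ∧ u ≠ y ∧ v ≠ x)
    (n : ℕ) (hn : 3 ≤ n) (a b : ℕ → V)
    (ha_inj : ∀ i < n, ∀ j < n, a i = a j → i = j)
    (hb_inj : ∀ i < n, ∀ j < n, b i = b j → i = j)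
    (hab : ∀ i < n, ∀ j < n, a i ≠ b j)
    (hrung : ∀ i < n, G.Adj (a i) (b i))
    (hraila : ∀ i, i + 1 < n → G.Adj (a i) (a (i + 1)))
    (hrailb : ∀ i, i + 1 < n → G.Adj (b i) (b (i + 1)))
    (hsata : ∀ i, 0 < i → i + 1 < n →
      ∀ w : V, G.Adj (a i) w → w = a (i - 1) ∨ w = a (i + 1) ∨ w = b i)
    (hsatb : ∀ i, 0 < i → i + 1 < n →
      ∀ w : V, G.Adj (b i) w → w = b (i - 1) ∨ w = b (i + 1) ∨ w = a i) :
    letI P1 : Prop := G.Adj (a 0) (a (n - 1)) ∧ G.Adj (b 0) (b (n - 1)) ∧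
      Nonempty (G ≃g prismGraph n)
    letI P2 : Prop := G.Adj (a 0) (b (n - 1)) ∧ G.Adj (b 0) (a (n - 1)) ∧
      Nonempty (G ≃g mobiusLadder n)
    letI P3 : Prop := ∃ a' b' : V,
      (∀ i < n, a' ≠ a i ∧ a' ≠ b i ∧ b' ≠ a i ∧ b' ≠ b i) ∧ a' ≠ b' ∧
      G.Adj (a (n - 1)) a' ∧ G.Adj (b (n - 1)) b' ∧ G.Adj a' b'
    (P1 ∧ ¬P2 ∧ ¬P3) ∨ (¬P1 ∧ P2 ∧ ¬P3) ∨ (¬P1 ∧ ¬P2 ∧ P3) := by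
  open SimpleGraph in
  have L : G.IsSaturatedLadder n a b :=
    ⟨ha_inj, hb_inj, hab, hrung, hraila, hrailb, hsata, hsatb⟩
  obtain ⟨a', ha'⟩ := L.exists_isThirdNeighbor_last hcubic (by omega)
  obtain ⟨b', hb'⟩ := L.swap.exists_isThirdNeighbor_last hcubic (by omega)
  have ha0b0 : a 0 ≠ b 0 := hab 0 (by omega) 0 (by omega)
  by_cases ha'S : a' ∈ ladderVerts n a b
  · have hends := L.thirdNeighbors_eq_of_mem hcubic htrianglefree hsquares hn ha' hb' ha'S
    have hall := L.forall_mem_ladderVerts hconn hcubic hn ha' hb' hends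
    have hnP3 (x : V) : ¬∀ i < n, x ≠ a i ∧ x ≠ b i :=
      (notMem_ladderVerts_iff.2 · (hall x))
    rcases hends with ⟨rfl, rfl⟩ | ⟨rfl, rfl⟩
    · refine .inl ⟨⟨ha'.1.symm, hb'.1.symm,
        L.nonempty_iso_prismGraph hcubic hn hall ha'.1 hb'.1⟩,
        fun h => ha0b0 (L.eq_b_zero_of_adj (by omega) ha' h.2.1.symm), ?_⟩
      exact fun ⟨x, _, hx, _⟩ => hnP3 x fun i hi => ⟨(hx i hi).1, (hx i hi).2.1⟩
    · refine .inr (.inl ⟨fun h => ha0b0 (L.eq_a_zero_of_adj hn ha' h.1.symm).symm,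
        ⟨hb'.1.symm, ha'.1.symm,
          L.nonempty_iso_mobiusLadder hcubic (by omega) hall ha'.1 hb'.1⟩, ?_⟩)
      exact fun ⟨x, _, hx, _⟩ => hnP3 x fun i hi => ⟨(hx i hi).1, (hx i hi).2.1⟩
  · have hb'S : b' ∉ ladderVerts n a b := fun hb'S => ha'S <| by
      rcases L.swap.thirdNeighbors_eq_of_mem hcubic htrianglefree hsquares hn hb' ha'
        (ladderVerts_comm n a b ▸ hb'S) with ⟨-, rfl⟩ | ⟨-, rfl⟩
      exacts [⟨0, by omega, .inl rfl⟩, ⟨0, by omega, .inr rfl⟩]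
    have hadj := L.adj_of_notMem hcubic hsquares hn ha' hb' ha'S hb'S
    refine .inr (.inr ⟨
      fun h => ha'S (L.eq_a_zero_of_adj hn ha' h.1.symm ▸ ⟨0, by omega, .inl rfl⟩),
      fun h => ha'S (L.eq_b_zero_of_adj (by omega) ha' h.2.1.symm ▸ ⟨0, by omega, .inr rfl⟩),
      a', b', fun i hi => ?_, hadj.ne, ha'.1, hb'.1, hadj⟩)
    have ha'i := notMem_ladderVerts_iff.1 ha'S i hi
    have hb'i := notMem_ladderVerts_iff.1 hb'S i hi
    exact ⟨ha'i.1, ha'i.2, hb'i.1, hb'i.2⟩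

/-- Let `G` be a finite connected simple 3-regular triangle-free graph
in which every edge lies on a 4-cycle, containing a ladder `L n` (`n ≥ 3`) on vertices
`a 0, …, a (n-1), b 0, …, b (n-1)` whose interior vertices already have all three
neighbours inside the ladder. Then exactly one of the following holds:
(i) `a 0 ∼ a (n-1)` and `b 0 ∼ b (n-1)` (and `G` is the prism `Y n`),
(ii) `a 0 ∼ b (n-1)` and `b 0 ∼ a (n-1)` (and `G` is the Möbius ladder `M n`), or
(iii) `G` contains a ladder `L (n+1)` extending the given one. -/
theorem ladder_extension_trichotomy {V : Type*} [Fintype V] (G : SimpleGraph V)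
    [∀ v, Fintype (G.neighborSet v)]
    (hconn : G.Connected)
    (hcubic : ∀ v : V, G.degree v = 3)
    (htrianglefree : G.CliqueFree 3)
    (hsquares : ∀ x y : V, G.Adj x y →
      ∃ u v : V, G.Adj x u ∧ G.Adj u v ∧ G.Adj v y ∧ u ≠ y ∧ v ≠ x)
    (n : ℕ) (hn : 3 ≤ n) (a b : ℕ → V)
    (ha_inj : ∀ i < n, ∀ j < n, a i = a j → i = j)
    (hb_inj : ∀ i < n, ∀ j < n, b i = b j → i = j)
    (hab : ∀ i < n, ∀ j < n, a i ≠ b j)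
    (hrung : ∀ i < n, G.Adj (a i) (b i))
    (hraila : ∀ i, i + 1 < n → G.Adj (a i) (a (i + 1)))
    (hrailb : ∀ i, i + 1 < n → G.Adj (b i) (b (i + 1)))
    (hsata : ∀ i, 0 < i → i + 1 < n →
      ∀ w : V, G.Adj (a i) w → w = a (i - 1) ∨ w = a (i + 1) ∨ w = b i)
    (hsatb : ∀ i, 0 < i → i + 1 < n →
      ∀ w : V, G.Adj (b i) w → w = b (i - 1) ∨ w = b (i + 1) ∨ w = a i) :
    letI P1 : Prop := G.Adj (a 0) (a (n - 1)) ∧ G.Adj (b 0) (b (n - 1)) ∧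
      Nonempty (G ≃g prismGraph n)
    letI P2 : Prop := G.Adj (a 0) (b (n - 1)) ∧ G.Adj (b 0) (a (n - 1)) ∧
      Nonempty (G ≃g mobiusLadder n)
    letI P3 : Prop := ∃ a' b' : V,
      (∀ i < n, a' ≠ a i ∧ a' ≠ b i ∧ b' ≠ a i ∧ b' ≠ b i) ∧ a' ≠ b' ∧
      G.Adj (a (n - 1)) a' ∧ G.Adj (b (n - 1)) b' ∧ G.Adj a' b'
    (P1 ∧ ¬P2 ∧ ¬P3) ∨ (¬P1 ∧ P2 ∧ ¬P3) ∨ (¬P1 ∧ ¬P2 ∧ P3) :=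
  ladder_extension_trichotomy_general G hconn hcubic htrianglefree hsquares n hn a b ha_inj hb_inj
    hab hrung hraila hrailb hsata hsatb
end
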